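/- arXiv:1907.04752 — 5 statements merged into one kernel-verified Lean document; each statement's English description precedes it below -/
import Mathlib

section
/- The position automaton of a regular expression R accepts exactly the language L(R): a string Q is accepted by the position automaton of R if and only if Q ∈ L(R). -/
/-- Non-empty regular expressions over alphabet `α`, identified with their parse trees. -/
inductive RE (α : Type) : Type where
  | eps : RE α
  | ch : α → RE α
  | cat : RE α → RE α → RE α
  | alt : RE α → RE α → RE α
  | star : RE α → RE α

/-- Child directions in the parse tree (a `star`-node only has an `L` child). -/
inductive Dir : Type where
  | L : Dir
  | R : Dir
  deriving DecidableEq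

/-- A node of the parse tree is identified with the path from the root to it. -/
abbrev TreePath : Type := List Dir

namespace RE

variable {α : Type}

/-- The subexpression of `R` rooted at the node reached by following path `v`
(`none` if no such node exists). -/
def sub : RE α → TreePath → Option (RE α)
  | r, [] => some r
  | .cat r _, .L :: p => sub r p
  | .cat _ s, .R :: p => sub s p
  | .alt r _, .L :: p => sub r p
  | .alt _ s, .R :: p => sub s p
  | .star r, .L :: p => sub r p
  | _, _ => none

/-- `v` is a node of the parse tree of `R`. -/
def IsNode (R : RE α) (v : TreePath) : Prop := ∃ r, R.sub v = some r

/-- The label of a position (character leaf); `none` if `p` is not a position. -/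
def labelOf (R : RE α) (p : TreePath) : Option α :=
  match R.sub p with
  | some (.ch a) => some a
  | _ => none

/-- `p` is a position of `R`, i.e. a leaf labeled by a character. -/
def IsPos (R : RE α) (p : TreePath) : Prop := ∃ a, R.labelOf p = some a

/-- `v` is a `⊙`-node (concatenation node). -/
def IsCatNode (R : RE α) (v : TreePath) : Prop := ∃ r s, R.sub v = some (.cat r s)

/-- `v` is a `∗`-node (Kleene-star node). -/
def IsStarNode (R : RE α) (v : TreePath) : Prop := ∃ r, R.sub v = some (.star r)

/-- `PosSeq r w` holds when `w` is a sequence of (paths to) positions of `r`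
whose labels spell some string of `L(r)`. -/
inductive PosSeq : RE α → List TreePath → Prop where
  | eps : PosSeq .eps []
  | ch (a : α) : PosSeq (.ch a) [[]]
  | cat {r s : RE α} {u v : List TreePath} : PosSeq r u → PosSeq s v →
      PosSeq (.cat r s) (u.map (Dir.L :: ·) ++ v.map (Dir.R :: ·))
  | altL {r s : RE α} {u : List TreePath} : PosSeq r u → PosSeq (.alt r s) (u.map (Dir.L :: ·))
  | altR {r s : RE α} {v : List TreePath} : PosSeq s v → PosSeq (.alt r s) (v.map (Dir.R :: ·))
  | starNil {r : RE α} : PosSeq (.star r) []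
  | starCons {r : RE α} {u w : List TreePath} : PosSeq r u → PosSeq (.star r) w →
      PosSeq (.star r) (u.map (Dir.L :: ·) ++ w)

/-- `first(v)`: the positions (as paths in `R`) that occur first in a position
sequence of the subexpression rooted at `v`. -/
def firstSet (R : RE α) (v : TreePath) : Set TreePath :=
  {p | ∃ r, R.sub v = some r ∧ ∃ p' w, PosSeq r (p' :: w) ∧ p = v ++ p'}

/-- `last(v)`: the positions (as paths in `R`) that occur last in a position
sequence of the subexpression rooted at `v`. -/
def lastSet (R : RE α) (v : TreePath) : Set TreePath :=
  {p | ∃ r, R.sub v = some r ∧ ∃ w p', PosSeq r (w ++ [p']) ∧ p = v ++ p'}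

/-- `follow(R,p)`: the positions that can follow `p` in a position sequence of `R`. -/
def followSet (R : RE α) (p : TreePath) : Set TreePath :=
  {q | ∃ w₁ w₂, PosSeq R (w₁ ++ p :: q :: w₂)}

/-- `firstextent(p) = {v : p ∈ first(v)}`. -/
def firstExtent (R : RE α) (p : TreePath) : Set TreePath := {v | p ∈ R.firstSet v}

/-- `lastextent(p) = {v : p ∈ last(v)}`. -/
def lastExtent (R : RE α) (p : TreePath) : Set TreePath := {v | p ∈ R.lastSet v}

/-- `firstextent(P)` for a set of positions `P`. -/
def firstExtentSet (R : RE α) (P : Set TreePath) : Set TreePath := ⋃ p ∈ P, R.firstExtent p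

/-- `lastextent(P)` for a set of positions `P`. -/
def lastExtentSet (R : RE α) (P : Set TreePath) : Set TreePath := ⋃ p ∈ P, R.lastExtent p

end RE

/-- Lowest common ancestor of two nodes = longest common prefix of the paths. -/
def lcaP : TreePath → TreePath → TreePath
  | a :: p, b :: q => if a = b then a :: lcaP p q else []
  | _, _ => []

namespace RE

variable {α : Type}

/-- `u = parent*(v)`: `u` is the lowest ancestor of `v` (possibly `v` itself)
that is a `∗`-node. -/
def IsLowestStarAnc (R : RE α) (v u : TreePath) : Prop :=
  u <+: v ∧ R.IsStarNode u ∧ ∀ w, w <+: v → R.IsStarNode w → w <+: u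

/-- `δ(p,α)`: the `α`-transitions of the position automaton out of position `p`. -/
def delta (R : RE α) (p : TreePath) (a : α) : Set TreePath :=
  {q | R.labelOf q = some a ∧ q ∈ R.followSet p}

/-- `δ(P,α) = ∪_{p ∈ P} δ(p,α)`. -/
def deltaSet (R : RE α) (P : Set TreePath) (a : α) : Set TreePath := ⋃ p ∈ P, R.delta p a

/-- Internal `⊙`-transition: `δ⊙(v,α) = {q ∈ Pos_α : right(v) ∈ firstextent(q)}`. -/
def deltaOdot (R : RE α) (v : TreePath) (a : α) : Set TreePath :=
  {q | R.labelOf q = some a ∧ q ∈ R.firstSet (v ++ [Dir.R])}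

/-- Internal `∗`-transition: `δ∗(v,α) = {q ∈ Pos_α : parent*(v) ∈ firstextent(q)}`. -/
def deltaStar (R : RE α) (v : TreePath) (a : α) : Set TreePath :=
  {q | R.labelOf q = some a ∧ ∃ u, R.IsLowestStarAnc v u ∧ q ∈ R.firstSet u}

/-- `N⊙(P,α)`: the `⊙`-transition nodes. -/
def NOdot (R : RE α) (P : Set TreePath) (a : α) : Set TreePath :=
  {v | R.IsCatNode v ∧ (v ++ [Dir.L]) ∈ R.lastExtentSet P ∧
    (∃ q, R.labelOf q = some a ∧ q ∈ R.firstSet (v ++ [Dir.R]))}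

/-- `N∗(P,α)`: the `∗`-transition nodes. -/
def NStar (R : RE α) (P : Set TreePath) (a : α) : Set TreePath :=
  {u | R.IsStarNode u ∧
    (∃ p ∈ P, ∃ q, R.labelOf q = some a ∧ R.IsLowestStarAnc (lcaP p q) u) ∧
    (∃ p ∈ P, p ∈ R.lastSet u) ∧ (∃ q, R.labelOf q = some a ∧ q ∈ R.firstSet u)}

/-- `u` `∗`-dominates `v`: `u` is a proper ancestor of `v` and `first(v) ⊆ first(u)`. -/
def StarDom (R : RE α) (u v : TreePath) : Prop :=
  u <+: v ∧ u ≠ v ∧ R.firstSet v ⊆ R.firstSet u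

/-- `u` `⊙`-dominates `v`: `u` is a proper ancestor of `v` and
`first(right(v)) ⊆ first(right(u))`. -/
def OdotDom (R : RE α) (u v : TreePath) : Prop :=
  u <+: v ∧ u ≠ v ∧ R.firstSet (v ++ [Dir.R]) ⊆ R.firstSet (u ++ [Dir.R])

/-- `Ñ⊙(P,α)`: the relevant `⊙`-transition nodes. -/
def RelNOdot (R : RE α) (P : Set TreePath) (a : α) : Set TreePath :=
  {v ∈ R.NOdot P a | ∀ u ∈ R.NOdot P a, ¬ R.OdotDom u v}

/-- `Ñ∗(P,α)`: the relevant `∗`-transition nodes. -/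
def RelNStar (R : RE α) (P : Set TreePath) (a : α) : Set TreePath :=
  {v ∈ R.NStar P a | ∀ u ∈ R.NStar P a, ¬ R.StarDom u v}

/-- `v` is a node of the transition tree `T` of `P`: an ancestor of some position of `P`. -/
def InT (R : RE α) (P : Set TreePath) (v : TreePath) : Prop := ∃ p ∈ P, v <+: p

/-- `v` is a branching node of the transition tree of `P`: both children are in `T`. -/
def Branching (R : RE α) (P : Set TreePath) (v : TreePath) : Prop :=
  R.InT P (v ++ [Dir.L]) ∧ R.InT P (v ++ [Dir.R])

/-- `v` is a leaf of the transition tree of `P`. -/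
def LeafT (R : RE α) (P : Set TreePath) (v : TreePath) : Prop :=
  R.InT P v ∧ ∀ d : Dir, ¬ R.InT P (v ++ [d])

/-- `v` is a `⊙`-live node: a `⊙`-node with `left(v) ∈ lastextent(P)`. -/
def OdotLive (R : RE α) (P : Set TreePath) (v : TreePath) : Prop :=
  R.IsCatNode v ∧ (v ++ [Dir.L]) ∈ R.lastExtentSet P

/-- `v` is weakly `⊙`-dominated by `u`: `u` is `⊙`-live, a proper ancestor of `v`,
and `first(v) ⊆ first(right(u))`. -/
def WeakOdotDom (R : RE α) (P : Set TreePath) (u v : TreePath) : Prop :=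
  R.OdotLive P u ∧ u <+: v ∧ u ≠ v ∧ R.firstSet v ⊆ R.firstSet (u ++ [Dir.R])

/-- The pair `(t, b)` delimits a segment of the transition tree of `P`: a path from a
leaf or branching node `b` up to the nearest branching node `t` strictly above it
(or to the root if there is none). -/
def IsSegment (R : RE α) (P : Set TreePath) (t b : TreePath) : Prop :=
  R.InT P b ∧ t <+: b ∧ t ≠ b ∧
  (R.LeafT P b ∨ R.Branching P b) ∧
  (R.Branching P t ∨ t = []) ∧
  (∀ w, t <+: w → w <+: b → w ≠ t → w ≠ b → ¬ R.Branching P w)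

/-- The language `L(R)`. -/
def lang : RE α → Set (List α)
  | .eps => {[]}
  | .ch a => {[a]}
  | .cat r s => {w | ∃ u ∈ lang r, ∃ v ∈ lang s, w = u ++ v}
  | .alt r s => lang r ∪ lang s
  | .star r => {w | ∃ l : List (List α), (∀ u ∈ l, u ∈ lang r) ∧ w = l.flatten}

/-- The position automaton (Glushkov automaton) of `R`: states are the positions of `R`
plus a start state `none`; for `q ∈ first(R)` there is a transition `(p₀, q, label(q))`,
and for `q ∈ follow(R,p)` a transition `(p, q, label(q))`; accepting states are
`last(R)`, together with `p₀` if `ε ∈ L(R)`. -/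
def posNFA (R : RE α) : NFA α (Option TreePath) where
  step := fun s a =>
    {t | ∃ q : TreePath, t = some q ∧ R.labelOf q = some a ∧
      ((s = none ∧ q ∈ R.firstSet []) ∨ (∃ p, s = some p ∧ q ∈ R.followSet p))}
  start := {none}
  accept := {t | (∃ p, t = some p ∧ p ∈ R.lastSet []) ∨ (t = none ∧ [] ∈ R.lang)}

end RE
namespace RE

variable {α : Type}

/-- `p` is a first position of `r`. -/
def Fst (r : RE α) (p : TreePath) : Prop := ∃ w, PosSeq r (p :: w)

/-- `p` is a last position of `r`. -/
def Lst (r : RE α) (p : TreePath) : Prop := ∃ w, PosSeq r (w ++ [p])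

/-- `q` can follow `p` in `r`. -/
def Fol (r : RE α) (p q : TreePath) : Prop := ∃ w₁ w₂, PosSeq r (w₁ ++ p :: q :: w₂)

/-- step relation inside a star. -/
def SFol (r : RE α) (p q : TreePath) : Prop := Fol r p q ∨ (Lst r p ∧ Fst r q)

lemma posSeq_eps {w : List TreePath} (h : PosSeq (.eps : RE α) w) : w = [] := by
  cases h; rfl

lemma posSeq_ch {a : α} {w : List TreePath} (h : PosSeq (.ch a) w) : w = [[]] := by
  cases h; rfl

lemma posSeq_cat {r s : RE α} {w : List TreePath} (h : PosSeq (.cat r s) w) :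
    ∃ u v, PosSeq r u ∧ PosSeq s v ∧ w = u.map (Dir.L :: ·) ++ v.map (Dir.R :: ·) := by
  cases h with
  | cat hu hv => exact ⟨_, _, hu, hv, rfl⟩

lemma posSeq_alt {r s : RE α} {w : List TreePath} (h : PosSeq (.alt r s) w) :
    (∃ u, PosSeq r u ∧ w = u.map (Dir.L :: ·)) ∨ (∃ v, PosSeq s v ∧ w = v.map (Dir.R :: ·)) := by
  cases h with
  | altL hu => exact Or.inl ⟨_, hu, rfl⟩
  | altR hv => exact Or.inr ⟨_, hv, rfl⟩

lemma posSeq_star {r : RE α} {w : List TreePath} (h : PosSeq (.star r) w) :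
    w = [] ∨ ∃ u w', PosSeq r u ∧ PosSeq (.star r) w' ∧ w = u.map (Dir.L :: ·) ++ w' := by
  cases h with
  | starNil => exact Or.inl rfl
  | starCons hu hw => exact Or.inr ⟨_, _, hu, hw, rfl⟩

lemma fst_eps {p : TreePath} : ¬ Fst (.eps : RE α) p := by
  rintro ⟨w, h⟩; simpa using posSeq_eps h

lemma fst_ch {a : α} {p : TreePath} (h : Fst (.ch a) p) : p = [] := by
  obtain ⟨w, h⟩ := h
  have := posSeq_ch h
  simp only [List.cons.injEq] at this
  exact this.1

lemma fst_cat {r s : RE α} {p : TreePath} (h : Fst (.cat r s) p) :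
    (∃ p', p = Dir.L :: p' ∧ Fst r p') ∨ (PosSeq r [] ∧ ∃ p', p = Dir.R :: p' ∧ Fst s p') := by
  obtain ⟨w, h⟩ := h
  obtain ⟨u, v, hu, hv, heq⟩ := posSeq_cat h
  cases u with
  | nil =>
    simp only [List.map_nil, List.nil_append] at heq
    cases v with
    | nil => simp at heq
    | cons q v' =>
      simp only [List.map_cons, List.cons.injEq] at heq
      exact Or.inr ⟨hu, q, heq.1, ⟨v', hv⟩⟩
  | cons x u' =>
    simp only [List.map_cons, List.cons_append, List.cons.injEq] at heq
    exact Or.inl ⟨x, heq.1, ⟨u', hu⟩⟩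

lemma fst_alt {r s : RE α} {p : TreePath} (h : Fst (.alt r s) p) :
    (∃ p', p = Dir.L :: p' ∧ Fst r p') ∨ (∃ p', p = Dir.R :: p' ∧ Fst s p') := by
  obtain ⟨w, h⟩ := h
  rcases posSeq_alt h with ⟨u, hu, heq⟩ | ⟨v, hv, heq⟩
  · cases u with
    | nil => simp at heq
    | cons x u' =>
      simp only [List.map_cons, List.cons.injEq] at heq
      exact Or.inl ⟨x, heq.1, ⟨u', hu⟩⟩
  · cases v with
    | nil => simp at heq
    | cons x v' =>
      simp only [List.map_cons, List.cons.injEq] at heq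
      exact Or.inr ⟨x, heq.1, ⟨v', hv⟩⟩

lemma fst_star_aux {e : RE α} {l : List TreePath} (h : PosSeq e l) :
    ∀ r p w, e = .star r → l = p :: w → ∃ p', p = Dir.L :: p' ∧ Fst r p' := by
  induction h with
  | eps => intro r p w he; simp at he
  | ch a => intro r p w he; simp at he
  | cat _ _ _ _ => intro r p w he; simp at he
  | altL _ _ => intro r p w he; simp at he
  | altR _ _ => intro r p w he; simp at he
  | starNil => intro r p w _ hl; simp at hl
  | starCons hu hw ihu ihw =>
    rename_i r₀ u w'
    intro r p w he hl
    injection he with he'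
    subst he'
    cases u with
    | nil =>
      simp only [List.map_nil, List.nil_append] at hl
      exact ihw _ p w rfl hl
    | cons x u' =>
      simp only [List.map_cons, List.cons_append, List.cons.injEq] at hl
      exact ⟨x, hl.1.symm, ⟨u', hu⟩⟩

lemma fst_star {r : RE α} {p : TreePath} (h : Fst (.star r) p) :
    ∃ p', p = Dir.L :: p' ∧ Fst r p' := by
  obtain ⟨w, h⟩ := h
  exact fst_star_aux h r p w rfl rfl

end RE
namespace RE

variable {α : Type}

lemma lst_eps {p : TreePath} : ¬ Lst (.eps : RE α) p := by
  rintro ⟨w, h⟩; simpa using posSeq_eps h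

lemma lst_ch {a : α} {p : TreePath} (h : Lst (.ch a) p) : p = [] := by
  obtain ⟨w, h⟩ := h
  have := posSeq_ch h
  cases w with
  | nil => simpa using this
  | cons x t => simp at this

lemma map_eq_snoc {f : TreePath → TreePath} {u : List TreePath} {w : List TreePath} {p : TreePath}
    (h : List.map f u = w ++ [p]) :
    ∃ u₀ p', u = u₀ ++ [p'] ∧ f p' = p ∧ List.map f u₀ = w := by
  rcases List.map_eq_append_iff.mp h with ⟨l₁, l₂, rfl, h1, h2⟩
  rcases List.map_eq_cons_iff.mp h2 with ⟨p', l₃, rfl, rfl, h3⟩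
  obtain rfl : l₃ = [] := by simpa using h3
  exact ⟨l₁, p', rfl, rfl, h1⟩

lemma lst_cat {r s : RE α} {p : TreePath} (h : Lst (.cat r s) p) :
    (∃ p', p = Dir.R :: p' ∧ Lst s p') ∨ (PosSeq s [] ∧ ∃ p', p = Dir.L :: p' ∧ Lst r p') := by
  obtain ⟨w, h⟩ := h
  obtain ⟨u, v, hu, hv, heq⟩ := posSeq_cat h
  cases v using List.reverseRecOn with
  | nil =>
    simp only [List.map_nil, List.append_nil] at heq
    obtain ⟨u₀, p', rfl, hp, _⟩ := map_eq_snoc heq.symm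
    exact Or.inr ⟨hv, p', hp.symm, ⟨u₀, hu⟩⟩
  | append_singleton v₀ q =>
    rw [List.map_append, List.map_cons, List.map_nil, ← List.append_assoc] at heq
    have := List.append_inj' heq (by simp)
    refine Or.inl ⟨q, ?_, ⟨v₀, hv⟩⟩
    have h2 := this.2
    simp only [List.cons.injEq] at h2
    exact h2.1

lemma lst_alt {r s : RE α} {p : TreePath} (h : Lst (.alt r s) p) :
    (∃ p', p = Dir.L :: p' ∧ Lst r p') ∨ (∃ p', p = Dir.R :: p' ∧ Lst s p') := by
  obtain ⟨w, h⟩ := h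
  rcases posSeq_alt h with ⟨u, hu, heq⟩ | ⟨v, hv, heq⟩
  · obtain ⟨u₀, p', rfl, hp, _⟩ := map_eq_snoc heq.symm
    exact Or.inl ⟨p', hp.symm, ⟨u₀, hu⟩⟩
  · obtain ⟨v₀, p', rfl, hp, _⟩ := map_eq_snoc heq.symm
    exact Or.inr ⟨p', hp.symm, ⟨v₀, hv⟩⟩

lemma lst_star_aux {e : RE α} {l : List TreePath} (h : PosSeq e l) :
    ∀ r w p, e = .star r → l = w ++ [p] → ∃ p', p = Dir.L :: p' ∧ Lst r p' := by
  induction h with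
  | eps => intro r w p he; simp at he
  | ch a => intro r w p he; simp at he
  | cat _ _ _ _ => intro r w p he; simp at he
  | altL _ _ => intro r w p he; simp at he
  | altR _ _ => intro r w p he; simp at he
  | starNil => intro r w p _ hl; simp at hl
  | starCons hu hw ihu ihw =>
    rename_i r₀ u w'
    intro r w p he hl
    injection he with he'
    subst he'
    cases w' using List.reverseRecOn with
    | nil =>
      rw [List.append_nil] at hl
      obtain ⟨u₀, p', rfl, hp, _⟩ := map_eq_snoc hl
      exact ⟨p', hp.symm, ⟨u₀, hu⟩⟩
    | append_singleton w₀ q =>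
      rw [← List.append_assoc] at hl
      have := List.append_inj' hl (by simp)
      obtain ⟨h1, h2⟩ := this
      obtain rfl : q = p := by simpa using h2
      exact ihw _ w₀ _ rfl rfl

lemma lst_star {r : RE α} {p : TreePath} (h : Lst (.star r) p) :
    ∃ p', p = Dir.L :: p' ∧ Lst r p' := by
  obtain ⟨w, h⟩ := h
  exact lst_star_aux h r w p rfl rfl

lemma map_fol {f : TreePath → TreePath} {v w₁ w₂ : List TreePath} {p q : TreePath}
    (h : List.map f v = w₁ ++ p :: q :: w₂) :
    ∃ a₁ p' q' a₂, v = a₁ ++ p' :: q' :: a₂ ∧ f p' = p ∧ f q' = q := by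
  rcases List.map_eq_append_iff.mp h with ⟨l₁, l₂, rfl, _, h2⟩
  rcases List.map_eq_cons_iff.mp h2 with ⟨p', l₃, rfl, rfl, h3⟩
  rcases List.map_eq_cons_iff.mp h3 with ⟨q', l₄, rfl, rfl, _⟩
  exact ⟨l₁, p', q', l₄, rfl, rfl, rfl⟩

lemma fol_eps {p q : TreePath} : ¬ Fol (.eps : RE α) p q := by
  rintro ⟨w₁, w₂, h⟩; simpa using posSeq_eps h

lemma fol_ch {a : α} {p q : TreePath} : ¬ Fol (.ch a) p q := by
  rintro ⟨w₁, w₂, h⟩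
  have := congrArg List.length (posSeq_ch h)
  simp at this
  omega

lemma fol_alt {r s : RE α} {p q : TreePath} (h : Fol (.alt r s) p q) :
    (∃ p' q', p = Dir.L :: p' ∧ q = Dir.L :: q' ∧ Fol r p' q') ∨
    (∃ p' q', p = Dir.R :: p' ∧ q = Dir.R :: q' ∧ Fol s p' q') := by
  obtain ⟨w₁, w₂, h⟩ := h
  rcases posSeq_alt h with ⟨u, hu, heq⟩ | ⟨v, hv, heq⟩
  · obtain ⟨a₁, p', q', a₂, rfl, hp, hq⟩ := map_fol heq.symm
    exact Or.inl ⟨p', q', hp.symm, hq.symm, ⟨a₁, a₂, hu⟩⟩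
  · obtain ⟨a₁, p', q', a₂, rfl, hp, hq⟩ := map_fol heq.symm
    exact Or.inr ⟨p', q', hp.symm, hq.symm, ⟨a₁, a₂, hv⟩⟩

lemma fol_cat {r s : RE α} {p q : TreePath} (h : Fol (.cat r s) p q) :
    (∃ p' q', p = Dir.L :: p' ∧ q = Dir.L :: q' ∧ Fol r p' q') ∨
    (∃ p' q', p = Dir.R :: p' ∧ q = Dir.R :: q' ∧ Fol s p' q') ∨
    (∃ p' q', p = Dir.L :: p' ∧ q = Dir.R :: q' ∧ Lst r p' ∧ Fst s q') := by
  obtain ⟨w₁, w₂, h⟩ := h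
  obtain ⟨u, v, hu, hv, heq⟩ := posSeq_cat h
  rcases List.append_eq_append_iff.mp heq.symm with ⟨a', h1, h2⟩ | ⟨c', h1, h2⟩
  · obtain ⟨a₁, p', q', a₂, rfl, hp, hq⟩ := map_fol h2
    exact Or.inr (Or.inl ⟨p', q', hp.symm, hq.symm, ⟨a₁, a₂, hv⟩⟩)
  · match c', h2 with
    | [], h2 =>
      rw [List.nil_append] at h2
      obtain ⟨a₁, p', q', a₂, rfl, hp, hq⟩ :=
        map_fol (show List.map _ v = [] ++ p :: q :: w₂ by simpa using h2.symm)
      exact Or.inr (Or.inl ⟨p', q', hp.symm, hq.symm, ⟨a₁, a₂, hv⟩⟩)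
    | [x], h2 =>
      simp only [List.cons_append, List.nil_append, List.cons.injEq] at h2
      obtain ⟨rfl, h2⟩ := h2
      obtain ⟨u₀, p', rfl, hp, _⟩ := map_eq_snoc h1
      cases v with
      | nil => simp at h2
      | cons q' v' =>
        simp only [List.map_cons, List.cons.injEq] at h2
        exact Or.inr (Or.inr ⟨p', q', hp.symm, h2.1, ⟨u₀, hu⟩, ⟨v', hv⟩⟩)
    | x :: y :: c'', h2 =>
      simp only [List.cons_append, List.cons.injEq] at h2
      obtain ⟨rfl, rfl, _⟩ := h2
      obtain ⟨a₁, p', q', a₂, rfl, hp, hq⟩ := map_fol h1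
      exact Or.inl ⟨p', q', hp.symm, hq.symm, ⟨a₁, a₂, hu⟩⟩

lemma fol_star_aux {e : RE α} {l : List TreePath} (h : PosSeq e l) :
    ∀ r w₁ p q w₂, e = .star r → l = w₁ ++ p :: q :: w₂ →
      ∃ p' q', p = Dir.L :: p' ∧ q = Dir.L :: q' ∧ SFol r p' q' := by
  induction h with
  | eps => intro r w₁ p q w₂ he; simp at he
  | ch a => intro r w₁ p q w₂ he; simp at he
  | cat _ _ _ _ => intro r w₁ p q w₂ he; simp at he
  | altL _ _ => intro r w₁ p q w₂ he; simp at he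
  | altR _ _ => intro r w₁ p q w₂ he; simp at he
  | starNil => intro r w₁ p q w₂ _ hl; simp at hl
  | starCons hu hw ihu ihw =>
    rename_i r₀ u w'
    intro r w₁ p q w₂ he hl
    injection he with he'
    subst he'
    rcases List.append_eq_append_iff.mp hl with ⟨a', h1, h2⟩ | ⟨c', h1, h2⟩
    · exact ihw _ a' p q w₂ rfl h2
    · match c', h2 with
      | [], h2 =>
        rw [List.nil_append] at h2
        exact ihw _ [] p q w₂ rfl (by simpa using h2.symm)
      | [x], h2 =>
        simp only [List.cons_append, List.nil_append, List.cons.injEq] at h2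
        obtain ⟨rfl, h2⟩ := h2
        obtain ⟨u₀, p', rfl, hp, _⟩ := map_eq_snoc h1
        have hq : Fst (.star _) q := ⟨w₂, by rw [h2]; exact hw⟩
        obtain ⟨q', hq', hfq⟩ := fst_star hq
        exact ⟨p', q', hp.symm, hq', Or.inr ⟨⟨u₀, hu⟩, hfq⟩⟩
      | x :: y :: c'', h2 =>
        simp only [List.cons_append, List.cons.injEq] at h2
        obtain ⟨rfl, rfl, _⟩ := h2
        obtain ⟨a₁, p', q', a₂, rfl, hp, hq⟩ := map_fol h1
        exact ⟨p', q', hp.symm, hq.symm, Or.inl ⟨a₁, a₂, hu⟩⟩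

lemma fol_star {r : RE α} {p q : TreePath} (h : Fol (.star r) p q) :
    ∃ p' q', p = Dir.L :: p' ∧ q = Dir.L :: q' ∧ SFol r p' q' := by
  obtain ⟨w₁, w₂, h⟩ := h
  exact fol_star_aux h r w₁ p q w₂ rfl rfl

end RE
namespace RE

variable {α : Type}

lemma fol_alt_L {r s : RE α} {x y : TreePath} (h : Fol (.alt r s) (Dir.L :: x) y) :
    ∃ y', y = Dir.L :: y' := by
  rcases fol_alt h with ⟨p', q', hp, hq, _⟩ | ⟨p', q', hp, _, _⟩
  · exact ⟨q', hq⟩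
  · simp at hp

lemma fol_alt_R {r s : RE α} {x y : TreePath} (h : Fol (.alt r s) (Dir.R :: x) y) :
    ∃ y', y = Dir.R :: y' := by
  rcases fol_alt h with ⟨p', q', hp, _, _⟩ | ⟨p', q', hp, hq, _⟩
  · simp at hp
  · exact ⟨q', hq⟩

lemma fol_alt_LL {r s : RE α} {x y : TreePath} (h : Fol (.alt r s) (Dir.L :: x) (Dir.L :: y)) :
    Fol r x y := by
  rcases fol_alt h with ⟨p', q', hp, hq, hf⟩ | ⟨p', q', hp, _, _⟩
  · simp only [List.cons.injEq, true_and] at hp hq; rwa [hp, hq]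
  · simp at hp

lemma fol_alt_RR {r s : RE α} {x y : TreePath} (h : Fol (.alt r s) (Dir.R :: x) (Dir.R :: y)) :
    Fol s x y := by
  rcases fol_alt h with ⟨p', q', hp, _, _⟩ | ⟨p', q', hp, hq, hf⟩
  · simp at hp
  · simp only [List.cons.injEq, true_and] at hp hq; rwa [hp, hq]

lemma fol_cat_R {r s : RE α} {x y : TreePath} (h : Fol (.cat r s) (Dir.R :: x) y) :
    ∃ y', y = Dir.R :: y' := by
  rcases fol_cat h with ⟨p', q', hp, _, _⟩ | ⟨p', q', _, hq, _⟩ | ⟨p', q', hp, _, _⟩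
  · simp at hp
  · exact ⟨q', hq⟩
  · simp at hp

lemma fol_cat_LL {r s : RE α} {x y : TreePath} (h : Fol (.cat r s) (Dir.L :: x) (Dir.L :: y)) :
    Fol r x y := by
  rcases fol_cat h with ⟨p', q', hp, hq, hf⟩ | ⟨p', q', hp, _, _⟩ | ⟨p', q', _, hq, _⟩
  · simp only [List.cons.injEq, true_and] at hp hq; rwa [hp, hq]
  · simp at hp
  · simp at hq

lemma fol_cat_RR {r s : RE α} {x y : TreePath} (h : Fol (.cat r s) (Dir.R :: x) (Dir.R :: y)) :
    Fol s x y := by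
  rcases fol_cat h with ⟨p', q', hp, _, _⟩ | ⟨p', q', hp, hq, hf⟩ | ⟨p', q', hp, _, _⟩
  · simp at hp
  · simp only [List.cons.injEq, true_and] at hp hq; rwa [hp, hq]
  · simp at hp

lemma fol_cat_LR {r s : RE α} {x y : TreePath} (h : Fol (.cat r s) (Dir.L :: x) (Dir.R :: y)) :
    Lst r x ∧ Fst s y := by
  rcases fol_cat h with ⟨p', q', _, hq, _⟩ | ⟨p', q', hp, _, _⟩ | ⟨p', q', hp, hq, hf⟩
  · simp at hq
  · simp at hp
  · simp only [List.cons.injEq, true_and] at hp hq; rw [hp, hq]; exact hf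

lemma fol_star_L {r : RE α} {x y : TreePath} (h : Fol (.star r) (Dir.L :: x) y) :
    ∃ y', y = Dir.L :: y' := by
  obtain ⟨p', q', _, hq, _⟩ := fol_star h
  exact ⟨q', hq⟩

lemma fol_star_LL {r : RE α} {x y : TreePath} (h : Fol (.star r) (Dir.L :: x) (Dir.L :: y)) :
    SFol r x y := by
  obtain ⟨p', q', hp, hq, hf⟩ := fol_star h
  simp only [List.cons.injEq, true_and] at hp hq
  rw [hp, hq]; exact hf

lemma lst_alt_L {r s : RE α} {x : TreePath} (h : Lst (.alt r s) (Dir.L :: x)) : Lst r x := by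
  rcases lst_alt h with ⟨p', hp, hl⟩ | ⟨p', hp, _⟩
  · simp only [List.cons.injEq, true_and] at hp; rwa [hp]
  · simp at hp

lemma lst_alt_R {r s : RE α} {x : TreePath} (h : Lst (.alt r s) (Dir.R :: x)) : Lst s x := by
  rcases lst_alt h with ⟨p', hp, _⟩ | ⟨p', hp, hl⟩
  · simp at hp
  · simp only [List.cons.injEq, true_and] at hp; rwa [hp]

lemma lst_cat_L {r s : RE α} {x : TreePath} (h : Lst (.cat r s) (Dir.L :: x)) :
    PosSeq s [] ∧ Lst r x := by
  rcases lst_cat h with ⟨p', hp, _⟩ | ⟨hn, p', hp, hl⟩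
  · simp at hp
  · simp only [List.cons.injEq, true_and] at hp; rw [hp]; exact ⟨hn, hl⟩

lemma lst_cat_R {r s : RE α} {x : TreePath} (h : Lst (.cat r s) (Dir.R :: x)) : Lst s x := by
  rcases lst_cat h with ⟨p', hp, hl⟩ | ⟨_, p', hp, _⟩
  · simp only [List.cons.injEq, true_and] at hp; rwa [hp]
  · simp at hp

lemma lst_star_L {r : RE α} {x : TreePath} (h : Lst (.star r) (Dir.L :: x)) : Lst r x := by
  obtain ⟨p', hp, hl⟩ := lst_star h
  simp only [List.cons.injEq, true_and] at hp; rwa [hp]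

lemma chain_lift {T : TreePath → TreePath → Prop} {d : Dir}
    (step : ∀ x y, T (d :: x) y → ∃ y', y = d :: y') :
    ∀ (w : List TreePath) (x : TreePath), List.Chain' T ((d :: x) :: w) →
      ∃ w' : List TreePath, w = w'.map (d :: ·) := by
  intro w
  induction w with
  | nil => exact fun _ _ => ⟨[], rfl⟩
  | cons y t ih =>
    intro x hc
    rw [List.Chain', List.isChain_cons_cons] at hc
    obtain ⟨y', rfl⟩ := step x y hc.1
    obtain ⟨w', rfl⟩ := ih y' hc.2
    exact ⟨y' :: w', rfl⟩

lemma cat_chain_split {r s : RE α} :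
    ∀ (w : List TreePath) (x : TreePath), List.Chain' (Fol (.cat r s)) ((Dir.L :: x) :: w) →
      ∃ u v : List TreePath, w = u.map (Dir.L :: ·) ++ v.map (Dir.R :: ·) := by
  intro w
  induction w with
  | nil => exact fun _ _ => ⟨[], [], rfl⟩
  | cons y t ih =>
    intro x hc
    rw [List.Chain', List.isChain_cons_cons] at hc
    rcases fol_cat hc.1 with ⟨p', q', _, hq, _⟩ | ⟨p', q', hp, _, _⟩ | ⟨p', q', _, hq, _⟩
    · subst hq
      obtain ⟨u, v, rfl⟩ := ih q' hc.2
      exact ⟨q' :: u, v, rfl⟩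
    · simp at hp
    · subst hq
      obtain ⟨v, rfl⟩ := chain_lift (fun a b h => fol_cat_R h) t q' hc.2
      exact ⟨[], q' :: v, rfl⟩

lemma chainFirstBlock {r : RE α} :
    ∀ (xs : List TreePath) (x : TreePath), List.Chain' (SFol r) (x :: xs) →
      List.Chain' (Fol r) (x :: xs) ∨
      ∃ b y rest, x :: xs = b ++ y :: rest ∧ b ≠ [] ∧ List.Chain' (Fol r) b ∧
        (∀ p ∈ b.getLast?, Lst r p) ∧ Fst r y ∧ List.Chain' (SFol r) (y :: rest) := by
  intro xs
  induction xs with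
  | nil => exact fun _ _ => Or.inl (List.isChain_singleton _)
  | cons y t ih =>
    intro x hc
    rw [List.Chain', List.isChain_cons_cons] at hc
    by_cases hf : Fol r x y
    · rcases ih y hc.2 with h | ⟨b, z, rest, heq, hbne, hbc, hbl, hfz, hcr⟩
      · exact Or.inl (List.isChain_cons_cons.mpr ⟨hf, h⟩)
      · refine Or.inr ⟨x :: b, z, rest, by rw [List.cons_append, heq], by simp, ?_, ?_, hfz, hcr⟩
        · cases b with
          | nil => exact absurd rfl hbne
          | cons b0 b' =>
            obtain rfl : y = b0 := by
              simpa using congrArg List.head? heq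
            exact List.isChain_cons_cons.mpr ⟨hf, hbc⟩
        · cases b with
          | nil => exact absurd rfl hbne
          | cons b0 b' => simpa [List.getLast?_cons_cons] using hbl
    · rcases hc.1 with hf' | ⟨hl, hfy⟩
      · exact absurd hf' hf
      · exact Or.inr ⟨[x], y, t, rfl, by simp, List.isChain_singleton _,
          by simpa using hl, hfy, hc.2⟩

lemma starSnoc_aux {e : RE α} {w : List TreePath} (h : PosSeq e w) :
    ∀ r u, e = .star r → PosSeq r u → PosSeq (.star r) (w ++ u.map (Dir.L :: ·)) := by
  induction h with
  | eps => intro r u he; simp at he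
  | ch a => intro r u he; simp at he
  | cat _ _ _ _ => intro r u he; simp at he
  | altL _ _ => intro r u he; simp at he
  | altR _ _ => intro r u he; simp at he
  | starNil =>
    intro r u he hu
    injection he with he'
    subst he'
    simpa using PosSeq.starCons hu PosSeq.starNil
  | starCons h1 h2 ih1 ih2 =>
    intro r u he hu
    injection he with he'
    subst he'
    rw [List.append_assoc]
    exact PosSeq.starCons h1 (ih2 _ u rfl hu)

lemma starStitch {r : RE α}
    (Hr : ∀ w, List.Chain' (Fol r) w → (∀ p ∈ w.head?, Fst r p) →
      (∀ p ∈ w.getLast?, Lst r p) → w ≠ [] → PosSeq r w) :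
    ∀ (n : ℕ) (xs : List TreePath), xs.length ≤ n → List.Chain' (SFol r) xs →
      (∀ p ∈ xs.head?, Fst r p) → (∀ p ∈ xs.getLast?, Lst r p) →
      PosSeq (.star r) (xs.map (Dir.L :: ·)) := by
  intro n
  induction n with
  | zero =>
    intro xs hlen _ _ _
    obtain rfl : xs = [] := List.length_eq_zero_iff.mp (Nat.le_zero.mp hlen)
    exact PosSeq.starNil
  | succ n ih =>
    intro xs hlen hc hh hl
    cases xs with
    | nil => exact PosSeq.starNil
    | cons x t =>
      rcases chainFirstBlock t x hc with h1 | ⟨b, y, rest, heq, hbne, hbc, hbl, hfy, hcr⟩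
      · have hps := Hr (x :: t) h1 hh hl (by simp)
        simpa using PosSeq.starCons hps PosSeq.starNil
      · have hbhead : b.head? = some x := by
          cases b with
          | nil => exact absurd rfl hbne
          | cons b0 b' => simpa using (congrArg List.head? heq).symm
        have hpb : PosSeq r b := by
          refine Hr b hbc ?_ hbl hbne
          intro p hp
          rw [hbhead] at hp
          obtain rfl : x = p := by simpa using hp
          exact hh _ (by simp)
        have hlen2 : (y :: rest).length ≤ n := by
          have := congrArg List.length heq
          cases b with
          | nil => exact absurd rfl hbne
          | cons b0 b' =>
            simp only [List.length_cons, List.length_append] at this hlen ⊢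
            omega
        have hrest : PosSeq (.star r) ((y :: rest).map (Dir.L :: ·)) := by
          refine ih (y :: rest) hlen2 hcr ?_ ?_
          · intro p hp
            obtain rfl : y = p := by simpa using hp
            exact hfy
          · intro p hp
            apply hl p
            rw [heq, List.getLast?_append]
            rcases hgl : (y :: rest).getLast? with _ | z
            · rw [hgl] at hp; exact absurd hp (by simp)
            · rw [hgl] at hp; simpa [Option.or] using hp
        rw [heq, List.map_append]
        exact PosSeq.starCons hpb hrest

end RE
namespace RE

variable {α : Type}

theorem stitch : ∀ (r : RE α) (w : List TreePath), List.Chain' (Fol r) w →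
    (∀ p ∈ w.head?, Fst r p) → (∀ p ∈ w.getLast?, Lst r p) → w ≠ [] → PosSeq r w := by
  intro r
  induction r with
  | eps =>
    intro w _ hh _ hne
    cases w with
    | nil => exact absurd rfl hne
    | cons p t => exact absurd (hh p (by simp)) fst_eps
  | ch a =>
    intro w hc hh _ hne
    cases w with
    | nil => exact absurd rfl hne
    | cons p t =>
      obtain rfl : p = [] := fst_ch (hh p (by simp))
      cases t with
      | nil => exact PosSeq.ch a
      | cons q t' => exact absurd (List.isChain_cons_cons.mp hc).1 fol_ch
  | alt r s ihr ihs =>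
    intro w hc hh hl hne
    obtain ⟨p, t, rfl⟩ : ∃ p t, w = p :: t := by
      cases w with
      | nil => exact absurd rfl hne
      | cons p t => exact ⟨p, t, rfl⟩
    rcases fst_alt (hh p (by simp)) with ⟨p', rfl, hf⟩ | ⟨p', rfl, hf⟩
    · obtain ⟨t', rfl⟩ := chain_lift (fun x y h => fol_alt_L h) t p' hc
      have hw : (Dir.L :: p') :: t'.map (Dir.L :: ·) = (p' :: t').map (Dir.L :: ·) := rfl
      rw [hw] at hc hl ⊢
      apply PosSeq.altL
      refine ihr (p' :: t') ?_ ?_ ?_ (by simp)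
      · exact ((List.isChain_map _).mp hc).imp (fun a b h => fol_alt_LL h)
      · intro x hx
        obtain rfl : p' = x := by simpa using hx
        exact hf
      · intro x hx
        apply lst_alt_L
        apply hl
        rw [List.getLast?_map]
        simp only [Option.mem_def] at hx
        rw [hx]
        rfl
    · obtain ⟨t', rfl⟩ := chain_lift (fun x y h => fol_alt_R h) t p' hc
      have hw : (Dir.R :: p') :: t'.map (Dir.R :: ·) = (p' :: t').map (Dir.R :: ·) := rfl
      rw [hw] at hc hl ⊢
      apply PosSeq.altR
      refine ihs (p' :: t') ?_ ?_ ?_ (by simp)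
      · exact ((List.isChain_map _).mp hc).imp (fun a b h => fol_alt_RR h)
      · intro x hx
        obtain rfl : p' = x := by simpa using hx
        exact hf
      · intro x hx
        apply lst_alt_R
        apply hl
        rw [List.getLast?_map]
        simp only [Option.mem_def] at hx
        rw [hx]
        rfl
  | cat r s ihr ihs =>
    intro w hc hh hl hne
    obtain ⟨p, t, rfl⟩ : ∃ p t, w = p :: t := by
      cases w with
      | nil => exact absurd rfl hne
      | cons p t => exact ⟨p, t, rfl⟩
    rcases fst_cat (hh p (by simp)) with ⟨p', rfl, hf⟩ | ⟨hnull, p', rfl, hf⟩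
    · obtain ⟨u, v, rfl⟩ := cat_chain_split t p' hc
      cases v with
      | nil =>
        have hw : (Dir.L :: p') :: (u.map (Dir.L :: ·) ++ List.map (Dir.R :: ·) []) =
            (p' :: u).map (Dir.L :: ·) := by simp
        rw [hw] at hc hl ⊢
        rcases hgl : (p' :: u).getLast? with _ | z
        · simp at hgl
        · have hz : Lst (.cat r s) (Dir.L :: z) := by
            apply hl
            rw [List.getLast?_map, hgl]
            rfl
          obtain ⟨hnulls, hlz⟩ := lst_cat_L hz
          have hpr : PosSeq r (p' :: u) := by
            refine ihr (p' :: u) ?_ ?_ ?_ (by simp)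
            · exact ((List.isChain_map _).mp hc).imp (fun a b h => fol_cat_LL h)
            · intro x hx
              obtain rfl : p' = x := by simpa using hx
              exact hf
            · intro x hx
              rw [hgl] at hx
              obtain rfl : z = x := by simpa using hx
              exact hlz
          simpa using PosSeq.cat hpr hnulls
      | cons q v' =>
        have hw : (Dir.L :: p') :: (u.map (Dir.L :: ·) ++ (q :: v').map (Dir.R :: ·)) =
            (p' :: u).map (Dir.L :: ·) ++ (q :: v').map (Dir.R :: ·) := rfl
        rw [hw] at hc hl ⊢
        rw [List.Chain', List.isChain_append] at hc
        obtain ⟨hc1, hc2, hbd⟩ := hc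
        rcases hgl : (p' :: u).getLast? with _ | z
        · simp at hgl
        · have hbd' : Fol (.cat r s) (Dir.L :: z) (Dir.R :: q) := by
            apply hbd
            · rw [List.getLast?_map, hgl]; rfl
            · simp
          obtain ⟨hlz, hfq⟩ := fol_cat_LR hbd'
          have hpr : PosSeq r (p' :: u) := by
            refine ihr (p' :: u) ?_ ?_ ?_ (by simp)
            · exact ((List.isChain_map _).mp hc1).imp (fun a b h => fol_cat_LL h)
            · intro x hx
              obtain rfl : p' = x := by simpa using hx
              exact hf
            · intro x hx
              rw [hgl] at hx
              obtain rfl : z = x := by simpa using hx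
              exact hlz
          have hps : PosSeq s (q :: v') := by
            refine ihs (q :: v') ?_ ?_ ?_ (by simp)
            · exact ((List.isChain_map _).mp hc2).imp (fun a b h => fol_cat_RR h)
            · intro x hx
              obtain rfl : q = x := by simpa using hx
              exact hfq
            · intro x hx
              apply lst_cat_R
              apply hl
              rw [List.getLast?_append, List.getLast?_map]
              simp only [Option.mem_def] at hx
              rw [hx]
              rfl
          exact PosSeq.cat hpr hps
    · obtain ⟨v, rfl⟩ := chain_lift (fun x y h => fol_cat_R h) t p' hc
      have hw : (Dir.R :: p') :: v.map (Dir.R :: ·) = (p' :: v).map (Dir.R :: ·) := rfl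
      rw [hw] at hc hl ⊢
      have hps : PosSeq s (p' :: v) := by
        refine ihs (p' :: v) ?_ ?_ ?_ (by simp)
        · exact ((List.isChain_map _).mp hc).imp (fun a b h => fol_cat_RR h)
        · intro x hx
          obtain rfl : p' = x := by simpa using hx
          exact hf
        · intro x hx
          apply lst_cat_R
          apply hl
          rw [List.getLast?_map]
          simp only [Option.mem_def] at hx
          rw [hx]
          rfl
      simpa using PosSeq.cat hnull hps
  | star r ihr =>
    intro w hc hh hl hne
    obtain ⟨p, t, rfl⟩ : ∃ p t, w = p :: t := by
      cases w with
      | nil => exact absurd rfl hne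
      | cons p t => exact ⟨p, t, rfl⟩
    obtain ⟨p', rfl, hf⟩ := fst_star (hh p (by simp))
    obtain ⟨t', rfl⟩ := chain_lift (fun x y h => fol_star_L h) t p' hc
    have hw : (Dir.L :: p') :: t'.map (Dir.L :: ·) = (p' :: t').map (Dir.L :: ·) := rfl
    rw [hw] at hc hl ⊢
    refine starStitch ihr (p' :: t').length (p' :: t') le_rfl ?_ ?_ ?_
    · exact ((List.isChain_map _).mp hc).imp (fun a b h => fol_star_LL h)
    · intro x hx
      obtain rfl : p' = x := by simpa using hx
      exact hf
    · intro x hx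
      apply lst_star_L
      apply hl
      rw [List.getLast?_map]
      simp only [Option.mem_def] at hx
      rw [hx]
      rfl

end RE
namespace RE

variable {α : Type}

lemma labelOf_cat_L (r s : RE α) (p : TreePath) :
    (RE.cat r s).labelOf (Dir.L :: p) = r.labelOf p := by
  simp [labelOf, sub]

lemma labelOf_cat_R (r s : RE α) (p : TreePath) :
    (RE.cat r s).labelOf (Dir.R :: p) = s.labelOf p := by
  simp [labelOf, sub]

lemma labelOf_alt_L (r s : RE α) (p : TreePath) :
    (RE.alt r s).labelOf (Dir.L :: p) = r.labelOf p := by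
  simp [labelOf, sub]

lemma labelOf_alt_R (r s : RE α) (p : TreePath) :
    (RE.alt r s).labelOf (Dir.R :: p) = s.labelOf p := by
  simp [labelOf, sub]

lemma labelOf_star_L (r : RE α) (p : TreePath) :
    (RE.star r).labelOf (Dir.L :: p) = r.labelOf p := by
  simp [labelOf, sub]

lemma map_labelOf_cat_L (r s : RE α) (u : List TreePath) :
    (u.map (Dir.L :: ·)).map (RE.cat r s).labelOf = u.map r.labelOf := by
  rw [List.map_map]
  exact List.map_congr_left (fun p _ => labelOf_cat_L r s p)

lemma map_labelOf_cat_R (r s : RE α) (v : List TreePath) :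
    (v.map (Dir.R :: ·)).map (RE.cat r s).labelOf = v.map s.labelOf := by
  rw [List.map_map]
  exact List.map_congr_left (fun p _ => labelOf_cat_R r s p)

lemma map_labelOf_alt_L (r s : RE α) (u : List TreePath) :
    (u.map (Dir.L :: ·)).map (RE.alt r s).labelOf = u.map r.labelOf := by
  rw [List.map_map]
  exact List.map_congr_left (fun p _ => labelOf_alt_L r s p)

lemma map_labelOf_alt_R (r s : RE α) (v : List TreePath) :
    (v.map (Dir.R :: ·)).map (RE.alt r s).labelOf = v.map s.labelOf := by
  rw [List.map_map]
  exact List.map_congr_left (fun p _ => labelOf_alt_R r s p)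

lemma map_labelOf_star_L (r : RE α) (u : List TreePath) :
    (u.map (Dir.L :: ·)).map (RE.star r).labelOf = u.map r.labelOf := by
  rw [List.map_map]
  exact List.map_congr_left (fun p _ => labelOf_star_L r p)

lemma posSeq_lang {r : RE α} {w : List TreePath} (h : PosSeq r w) :
    ∃ Q ∈ lang r, w.map r.labelOf = Q.map some := by
  induction h with
  | eps => exact ⟨[], by simp [lang], rfl⟩
  | ch a => exact ⟨[a], by simp [lang], by simp [labelOf, sub]⟩
  | cat h1 h2 ih1 ih2 =>
    obtain ⟨Q1, hQ1, hs1⟩ := ih1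
    obtain ⟨Q2, hQ2, hs2⟩ := ih2
    refine ⟨Q1 ++ Q2, ⟨Q1, hQ1, Q2, hQ2, rfl⟩, ?_⟩
    rw [List.map_append, List.map_append, map_labelOf_cat_L, map_labelOf_cat_R, hs1, hs2]
  | altL h ih =>
    obtain ⟨Q, hQ, hs⟩ := ih
    exact ⟨Q, Or.inl hQ, by rwa [map_labelOf_alt_L]⟩
  | altR h ih =>
    obtain ⟨Q, hQ, hs⟩ := ih
    exact ⟨Q, Or.inr hQ, by rwa [map_labelOf_alt_R]⟩
  | starNil => exact ⟨[], ⟨[], by simp⟩, rfl⟩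
  | starCons h1 h2 ih1 ih2 =>
    obtain ⟨Q1, hQ1, hs1⟩ := ih1
    obtain ⟨Q2, hQ2, hs2⟩ := ih2
    simp only [lang, Set.mem_setOf_eq] at hQ2
    obtain ⟨l, hall, rfl⟩ := hQ2
    refine ⟨Q1 ++ l.flatten, ⟨Q1 :: l, ?_, by simp⟩, ?_⟩
    · intro u hu
      rcases List.mem_cons.mp hu with h | h
      · exact h ▸ hQ1
      · exact hall u h
    · rw [List.map_append, List.map_append, map_labelOf_star_L, hs1, hs2]

lemma star_flatten_posSeq {r : RE α}
    (ihr : ∀ Q ∈ lang r, ∃ w, PosSeq r w ∧ w.map r.labelOf = Q.map some) :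
    ∀ l : List (List α), (∀ u ∈ l, u ∈ lang r) →
      ∃ w, PosSeq (RE.star r) w ∧ w.map (RE.star r).labelOf = l.flatten.map some := by
  intro l
  induction l with
  | nil => exact fun _ => ⟨[], PosSeq.starNil, rfl⟩
  | cons Q1 l' ih =>
    intro hall
    obtain ⟨w1, h1, hs1⟩ := ihr Q1 (hall Q1 (by simp))
    obtain ⟨w', h', hs'⟩ := ih (fun u hu => hall u (by simp [hu]))
    refine ⟨w1.map (Dir.L :: ·) ++ w', PosSeq.starCons h1 h', ?_⟩
    rw [List.map_append, map_labelOf_star_L, List.flatten_cons, List.map_append, hs1, hs']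

lemma lang_posSeq {r : RE α} : ∀ Q ∈ lang r, ∃ w, PosSeq r w ∧ w.map r.labelOf = Q.map some := by
  induction r with
  | eps =>
    intro Q hQ
    obtain rfl : Q = [] := hQ
    exact ⟨[], PosSeq.eps, rfl⟩
  | ch a =>
    intro Q hQ
    obtain rfl : Q = [a] := hQ
    exact ⟨[[]], PosSeq.ch a, by simp [labelOf, sub]⟩
  | cat r s ihr ihs =>
    intro Q hQ
    obtain ⟨Q1, hQ1, Q2, hQ2, rfl⟩ := hQ
    obtain ⟨w1, h1, hs1⟩ := ihr Q1 hQ1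
    obtain ⟨w2, h2, hs2⟩ := ihs Q2 hQ2
    refine ⟨w1.map (Dir.L :: ·) ++ w2.map (Dir.R :: ·), PosSeq.cat h1 h2, ?_⟩
    rw [List.map_append, map_labelOf_cat_L, map_labelOf_cat_R, hs1, hs2, List.map_append]
  | alt r s ihr ihs =>
    intro Q hQ
    rcases hQ with hQ | hQ
    · obtain ⟨w1, h1, hs1⟩ := ihr Q hQ
      exact ⟨w1.map (Dir.L :: ·), PosSeq.altL h1, by rwa [map_labelOf_alt_L]⟩
    · obtain ⟨w2, h2, hs2⟩ := ihs Q hQ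
      exact ⟨w2.map (Dir.R :: ·), PosSeq.altR h2, by rwa [map_labelOf_alt_R]⟩
  | star r ihr =>
    intro Q hQ
    simp only [lang, Set.mem_setOf_eq] at hQ
    obtain ⟨l, hall, rfl⟩ := hQ
    exact star_flatten_posSeq ihr l hall

lemma posSeq_chain'_aux {R : RE α} :
    ∀ (w₂ w₁ : List TreePath), PosSeq R (w₁ ++ w₂) → List.Chain' (Fol R) w₂ := by
  intro w₂
  induction w₂ with
  | nil => intro _ _; simp [List.Chain']
  | cons x t ih =>
    intro w₁ h
    cases t with
    | nil => simp [List.Chain']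
    | cons y t' =>
      rw [List.Chain', List.isChain_cons_cons]
      exact ⟨⟨w₁, t', h⟩, ih (w₁ ++ [x]) (by simpa using h)⟩

lemma posSeq_chain' {R : RE α} {w : List TreePath} (h : PosSeq R w) :
    List.Chain' (Fol R) w :=
  posSeq_chain'_aux w [] h

lemma mem_firstSet_nil {R : RE α} {p : TreePath} : p ∈ R.firstSet [] ↔ Fst R p := by
  simp [firstSet, sub, Fst]

lemma mem_lastSet_nil {R : RE α} {p : TreePath} : p ∈ R.lastSet [] ↔ Lst R p := by
  simp [lastSet, sub, Lst]

lemma mem_followSet {R : RE α} {p q : TreePath} : q ∈ R.followSet p ↔ Fol R p q := Iff.rfl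

end RE
namespace RE

variable {α : Type}

/-- There is a run of the position automaton on `Q` from the start state ending in
position `p`. -/
def RunTo (R : RE α) (Q : List α) (p : TreePath) : Prop :=
  ∃ ps : List TreePath, ps.getLast? = some p ∧ ps.map R.labelOf = Q.map some ∧
    List.Chain' (Fol R) ps ∧ ∀ x ∈ ps.head?, Fst R x

lemma eval_iff (R : RE α) :
    ∀ (Q : List α) (s : Option TreePath), s ∈ (posNFA R).eval Q ↔
      ((s = none ∧ Q = []) ∨ ∃ p, s = some p ∧ RunTo R Q p) := by
  intro Q
  induction Q using List.reverseRecOn with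
  | nil =>
    intro s
    rw [NFA.eval_nil]
    constructor
    · intro hs
      have : s = none := hs
      exact Or.inl ⟨this, rfl⟩
    · rintro (⟨rfl, _⟩ | ⟨p, rfl, ps, hlast, hmap, _, _⟩)
      · rfl
      · obtain rfl : ps = [] := by simpa using hmap
        simp at hlast
  | append_singleton Q a ih =>
    intro s
    rw [NFA.eval_append_singleton, NFA.mem_stepSet]
    constructor
    · rintro ⟨t, ht, hs⟩
      simp only [posNFA, Set.mem_setOf_eq] at hs
      obtain ⟨q, rfl, hlab, hcase⟩ := hs
      rcases hcase with ⟨rfl, hq⟩ | ⟨p, rfl, hq⟩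
      · rcases (ih none).mp ht with ⟨_, rfl⟩ | ⟨p, hp, _⟩
        · refine Or.inr ⟨q, rfl, [q], by simp, by simp [hlab], List.isChain_singleton _, ?_⟩
          intro x hx
          obtain rfl : q = x := by simpa using hx
          exact mem_firstSet_nil.mp hq
        · simp at hp
      · rcases (ih (some p)).mp ht with ⟨hp, _⟩ | ⟨p₂, hp₂, hrun⟩
        · simp at hp
        · obtain rfl : p = p₂ := by simpa using hp₂
          obtain ⟨ps, hlast, hmap, hchain, hhead⟩ := hrun
          refine Or.inr ⟨q, rfl, ps ++ [q], by simp, by simp [hmap, hlab], ?_, ?_⟩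
          · rw [List.Chain', List.isChain_append]
            refine ⟨hchain, List.isChain_singleton _, ?_⟩
            intro x hx y hy
            obtain rfl : p = x := by rw [hlast] at hx; simpa using hx
            obtain rfl : q = y := by simpa using hy
            exact hq
          · intro x hx
            cases ps with
            | nil => simp at hlast
            | cons z zs =>
              obtain rfl : z = x := by simpa using hx
              exact hhead z (by simp)
    · rintro (⟨rfl, hQ⟩ | ⟨p, rfl, hrun⟩)
      · simp at hQ
      · obtain ⟨ps, hlast, hmap, hchain, hhead⟩ := hrun
        obtain ⟨ps₀, rfl⟩ := List.getLast?_eq_some_iff.mp hlast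
        rw [List.map_append, List.map_append] at hmap
        obtain ⟨hmap₀, hlab⟩ := List.append_inj' hmap (by simp)
        have hlab' : R.labelOf p = some a := by simpa using hlab
        cases ps₀ with
        | nil =>
          obtain rfl : Q = [] := by simpa using hmap₀.symm
          refine ⟨none, (ih none).mpr (Or.inl ⟨rfl, rfl⟩), ?_⟩
          exact ⟨p, rfl, hlab', Or.inl ⟨rfl, mem_firstSet_nil.mpr (hhead p (by simp))⟩⟩
        | cons z zs =>
          rcases hgl : (z :: zs).getLast? with _ | p''
          · simp at hgl
          · rw [List.Chain', List.isChain_append] at hchain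
            obtain ⟨hc1, _, hbd⟩ := hchain
            have hfol : Fol R p'' p := hbd p'' hgl p (by simp)
            refine ⟨some p'', (ih (some p'')).mpr (Or.inr ⟨p'', rfl, z :: zs, hgl, hmap₀, hc1, ?_⟩), ?_⟩
            · intro x hx
              obtain rfl : z = x := by simpa using hx
              exact hhead z (by simp)
            · exact ⟨p, rfl, hlab', Or.inr ⟨p'', rfl, hfol⟩⟩

end RE

/-- The position automaton of a regular expression `R` accepts exactly the language
`L(R)`: a string `Q` is accepted by the position automaton of `R` iff `Q ∈ L(R)`. -/
theorem position_automaton_correct {α : Type} (R : RE α) (Q : List α) :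
    Q ∈ (RE.posNFA R).accepts ↔ Q ∈ R.lang := by
  rw [NFA.mem_accepts]
  have heval : (RE.posNFA R).evalFrom (RE.posNFA R).start Q = (RE.posNFA R).eval Q := rfl
  constructor
  · rintro ⟨S, hacc, hev⟩
    rw [heval] at hev
    rcases (RE.eval_iff R Q S).mp hev with ⟨rfl, rfl⟩ | ⟨p, rfl, hrun⟩
    · rcases hacc with ⟨p, hp, _⟩ | ⟨_, hlang⟩
      · simp at hp
      · exact hlang
    · have hlst : RE.Lst R p := by
        rcases hacc with ⟨p', hp', hl⟩ | ⟨hn, _⟩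
        · obtain rfl : p = p' := by simpa using hp'
          exact RE.mem_lastSet_nil.mp hl
        · simp at hn
      obtain ⟨ps, hlast, hmap, hchain, hhead⟩ := hrun
      have hps : RE.PosSeq R ps := by
        refine RE.stitch R ps hchain hhead ?_ ?_
        · intro x hx
          rw [hlast] at hx
          obtain rfl : p = x := by simpa using hx
          exact hlst
        · intro hnil
          rw [hnil] at hlast
          simp at hlast
      obtain ⟨Q', hQ', hsp⟩ := RE.posSeq_lang hps
      have hQQ : Q'.map some = Q.map some := by rw [← hsp, hmap]
      have : Q' = Q := List.map_injective_iff.mpr (Option.some_injective α) hQQ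
      exact this ▸ hQ'
  · intro hQ
    obtain ⟨w, hw, hsp⟩ := RE.lang_posSeq Q hQ
    cases w using List.reverseRecOn with
    | nil =>
      obtain rfl : Q = [] := by simpa using hsp.symm
      refine ⟨none, Or.inr ⟨rfl, hQ⟩, ?_⟩
      rw [heval]
      exact (RE.eval_iff R [] none).mpr (Or.inl ⟨rfl, rfl⟩)
    | append_singleton ps₀ z =>
      refine ⟨some z, Or.inl ⟨z, rfl, RE.mem_lastSet_nil.mpr ⟨ps₀, hw⟩⟩, ?_⟩
      rw [heval]
      refine (RE.eval_iff R Q (some z)).mpr (Or.inr ⟨z, rfl, ps₀ ++ [z], by simp, hsp,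
        RE.posSeq_chain' hw, ?_⟩)
      intro x hx
      cases ps₀ with
      | nil =>
        obtain rfl : z = x := by simpa using hx
        exact ⟨[], by simpa using hw⟩
      | cons y ys =>
        obtain rfl : y = x := by simpa using hx
        exact ⟨ys ++ [z], by simpa using hw⟩
end

section
/- For any position p of R, the set firstextent(p) is a path in the parse tree from p to an ancestor of p: p ∈ first(p) (i.e., p ∈ firstextent(p)), and if v ∈ firstextent(p) and w is any node on the parse-tree path between p and v (i.e., w is an ancestor of p and a descendant of v), then w ∈ firstextent(p). -/
/-! A position sequence of `r` whose first position is `m ++ q` restricts, along the path `m`,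
to a position sequence of the subexpression at `m` whose first position is `q`. So if
`p ∈ first(v)`, then `p ∈ first(w)` for every node `w` between `v` and `p`. -/

namespace RE

variable {α : Type}

theorem sub_append (R : RE α) (v m : TreePath) :
    R.sub (v ++ m) = (R.sub v).bind (·.sub m) := by
  induction v generalizing R with
  | nil => simp [sub]
  | cons d v ih => cases R <;> cases d <;> simp [sub, ih]

theorem sub_eq_ch_of_labelOf_eq {R : RE α} {p : TreePath} {a : α} (h : R.labelOf p = some a) :
    R.sub p = some (.ch a) := by
  unfold labelOf at h
  split at h <;> simp_all

theorem PosSeq.exists_sub_singleton_of_head_cons {r : RE α} {w : List TreePath}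
    (h : PosSeq r w) {d : Dir} {q : TreePath} {tail : List TreePath}
    (hw : w = (d :: q) :: tail) :
    ∃ r', r.sub [d] = some r' ∧ ∃ tail', PosSeq r' (q :: tail') := by
  induction h generalizing tail with
  | eps | ch | starNil => simp at hw
  | @cat r s u v hu hv =>
    rcases u with _ | ⟨u₀, u⟩
    · rcases v with _ | ⟨v₀, v⟩
      · simp at hw
      · obtain ⟨⟨rfl, rfl⟩, -⟩ := by simpa using hw
        exact ⟨s, by simp [sub], v, hv⟩
    · obtain ⟨⟨rfl, rfl⟩, -⟩ := by simpa using hw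
      exact ⟨r, by simp [sub], u, hu⟩
  | @altL r s u hu =>
    rcases u with _ | ⟨u₀, u⟩
    · simp at hw
    · obtain ⟨⟨rfl, rfl⟩, -⟩ := by simpa using hw
      exact ⟨r, by simp [sub], u, hu⟩
  | @altR r s v hv =>
    rcases v with _ | ⟨v₀, v⟩
    · simp at hw
    · obtain ⟨⟨rfl, rfl⟩, -⟩ := by simpa using hw
      exact ⟨s, by simp [sub], v, hv⟩
  | @starCons r u w hu _ _ ihw =>
    rcases u with _ | ⟨u₀, u⟩
    · exact ihw (by simpa using hw)
    · obtain ⟨⟨rfl, rfl⟩, -⟩ := by simpa using hw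
      exact ⟨r, by simp [sub], u, hu⟩

theorem PosSeq.exists_sub_of_head_append {r : RE α} {m q : TreePath} {tail : List TreePath}
    (h : PosSeq r ((m ++ q) :: tail)) :
    ∃ r', r.sub m = some r' ∧ ∃ tail', PosSeq r' (q :: tail') := by
  induction m generalizing r tail with
  | nil => exact ⟨r, by simp [sub], tail, h⟩
  | cons d m ih =>
    obtain ⟨r₁, hr₁, tail₁, h₁⟩ := h.exists_sub_singleton_of_head_cons rfl
    obtain ⟨r', hr', tail', h'⟩ := ih h₁
    refine ⟨r', ?_, tail', h'⟩
    rw [← List.singleton_append, sub_append, hr₁]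
    exact hr'

theorem prefix_of_mem_firstSet {R : RE α} {v p : TreePath} (h : p ∈ R.firstSet v) : v <+: p := by
  obtain ⟨-, -, p', -, -, rfl⟩ := h
  exact List.prefix_append v p'

theorem mem_firstSet_self_of_isPos {R : RE α} {p : TreePath} (hp : R.IsPos p) :
    p ∈ R.firstSet p := by
  obtain ⟨a, ha⟩ := hp
  exact ⟨.ch a, sub_eq_ch_of_labelOf_eq ha, [], [], .ch a, by simp⟩

theorem mem_firstSet_of_prefix {R : RE α} {v w p : TreePath} (h : p ∈ R.firstSet v)
    (hvw : v <+: w) (hwp : w <+: p) : p ∈ R.firstSet w := by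
  obtain ⟨r, hr, p', tail, hseq, rfl⟩ := h
  obtain ⟨m, rfl⟩ := hvw
  obtain ⟨q, rfl⟩ := (List.prefix_append_right_inj v).mp hwp
  obtain ⟨r', hr', tail', hseq'⟩ := hseq.exists_sub_of_head_append
  exact ⟨r', by rw [sub_append, hr]; exact hr', q, tail', hseq', by simp⟩

end RE

/-- For any position `p` of `R`, `firstextent(p)` is a path in the parse tree from `p`
to an ancestor of `p`: every member of `firstextent(p)` is an ancestor of `p`,
`p ∈ first(p)`, and if `v ∈ firstextent(p)` and `w` is any node between `p` and `v`
(an ancestor of `p` and a descendant of `v`), then `w ∈ firstextent(p)`. -/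
theorem firstExtent_is_path {α : Type} (R : RE α) (p : TreePath) (hp : R.IsPos p) :
    (∀ v ∈ R.firstExtent p, v <+: p) ∧
    p ∈ R.firstExtent p ∧
    (∀ v w : TreePath, v ∈ R.firstExtent p → v <+: w → w <+: p →
      w ∈ R.firstExtent p) :=
  ⟨fun _ hv => RE.prefix_of_mem_firstSet hv, RE.mem_firstSet_self_of_isPos hp,
    fun _ _ hv hvw hwp => RE.mem_firstSet_of_prefix hv hvw hwp⟩
end

section
/- For any position p of R, the set lastextent(p) is a path in the parse tree from p to an ancestor of p: p ∈ last(p) (i.e., p ∈ lastextent(p)), and if v ∈ lastextent(p) and w is any node on the parse-tree path between p and v (i.e., w is an ancestor of p and a descendant of v), then w ∈ lastextent(p). -/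
-- Auxiliary lemmas

theorem RE.sub_append_s2 {α : Type} : ∀ (v : TreePath) (R r : RE α) (w : TreePath),
    R.sub v = some r → R.sub (v ++ w) = r.sub w
  | [], R, r, w, h => by
    simp [RE.sub] at h; subst h; rfl
  | d :: v, R, r, w, h => by
    cases R <;> cases d <;>
      first
        | exact (by cases h)
        | exact RE.sub_append_s2 v _ r w h

theorem concat_eq_concat {X : Type} {a b : List X} {x y : X} (h : a ++ [x] = b ++ [y]) :
    x = y := by
  have := (List.append_inj' h rfl).2
  simpa using this

theorem RE.posSeq_last_sub {α : Type} {r : RE α} {u : List TreePath} (h : RE.PosSeq r u) :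
    ∀ ws p', u = ws ++ [p'] → ∀ d, d <+: p' →
      ∃ r', r.sub d = some r' ∧ ∃ ws' p'', RE.PosSeq r' (ws' ++ [p'']) ∧ p' = d ++ p'' := by
  induction h with
  | eps =>
    intro ws p' heq d hd
    exact absurd heq (by simp)
  | ch a =>
    intro ws p' heq d hd
    have hp' : p' = ([] : TreePath) := by
      have : ([] : List TreePath) ++ [[]] = ws ++ [p'] := by simpa using heq
      exact (concat_eq_concat this).symm
    subst hp'
    have hd' : d = [] := List.prefix_nil.mp hd
    subst hd'
    exact ⟨.ch a, rfl, [], [], RE.PosSeq.ch a, rfl⟩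
  | @cat r s u v hu hv ihu ihv =>
    intro ws p' heq d hd
    rcases d with _ | ⟨e, d'⟩
    · exact ⟨.cat r s, rfl, ws, p', heq ▸ RE.PosSeq.cat hu hv, rfl⟩
    · rcases List.eq_nil_or_concat v with rfl | ⟨vs, q, rfl⟩
      · rcases List.eq_nil_or_concat u with rfl | ⟨us, q, rfl⟩
        · exact absurd heq (by simp)
        · have hp' : p' = Dir.L :: q := by
            have h2 : us.map (Dir.L :: ·) ++ [Dir.L :: q] = ws ++ [p'] := by
              simpa using heq
            exact (concat_eq_concat h2).symm
          subst hp'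
          obtain ⟨he, hd'⟩ := List.cons_prefix_cons.mp hd
          subst he
          obtain ⟨r', hr', ws', p'', hps, hq⟩ := ihu us q List.concat_eq_append d' hd'
          exact ⟨r', hr', ws', p'', hps, by simp [hq]⟩
      · have hp' : p' = Dir.R :: q := by
          have h2 : (u.map (Dir.L :: ·) ++ vs.map (Dir.R :: ·)) ++ [Dir.R :: q]
              = ws ++ [p'] := by simpa using heq
          exact (concat_eq_concat h2).symm
        subst hp'
        obtain ⟨he, hd'⟩ := List.cons_prefix_cons.mp hd
        subst he
        obtain ⟨r', hr', ws', p'', hps, hq⟩ := ihv vs q List.concat_eq_append d' hd'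
        exact ⟨r', hr', ws', p'', hps, by simp [hq]⟩
  | @altL r s u hu ihu =>
    intro ws p' heq d hd
    rcases d with _ | ⟨e, d'⟩
    · exact ⟨.alt r s, rfl, ws, p', heq ▸ RE.PosSeq.altL hu, rfl⟩
    · rcases List.eq_nil_or_concat u with rfl | ⟨us, q, rfl⟩
      · exact absurd heq (by simp)
      · have hp' : p' = Dir.L :: q := by
          have h2 : us.map (Dir.L :: ·) ++ [Dir.L :: q] = ws ++ [p'] := by simpa using heq
          exact (concat_eq_concat h2).symm
        subst hp'
        obtain ⟨he, hd'⟩ := List.cons_prefix_cons.mp hd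
        subst he
        obtain ⟨r', hr', ws', p'', hps, hq⟩ := ihu us q List.concat_eq_append d' hd'
        exact ⟨r', hr', ws', p'', hps, by simp [hq]⟩
  | @altR r s u hu ihu =>
    intro ws p' heq d hd
    rcases d with _ | ⟨e, d'⟩
    · exact ⟨.alt r s, rfl, ws, p', heq ▸ RE.PosSeq.altR hu, rfl⟩
    · rcases List.eq_nil_or_concat u with rfl | ⟨us, q, rfl⟩
      · exact absurd heq (by simp)
      · have hp' : p' = Dir.R :: q := by
          have h2 : us.map (Dir.R :: ·) ++ [Dir.R :: q] = ws ++ [p'] := by simpa using heq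
          exact (concat_eq_concat h2).symm
        subst hp'
        obtain ⟨he, hd'⟩ := List.cons_prefix_cons.mp hd
        subst he
        obtain ⟨r', hr', ws', p'', hps, hq⟩ := ihu us q List.concat_eq_append d' hd'
        exact ⟨r', hr', ws', p'', hps, by simp [hq]⟩
  | starNil =>
    intro ws p' heq d hd
    exact absurd heq (by simp)
  | @starCons r u w hu hw ihu ihw =>
    intro ws p' heq d hd
    rcases List.eq_nil_or_concat w with rfl | ⟨ws2, q, rfl⟩
    · rcases d with _ | ⟨e, d'⟩
      · exact ⟨.star r, rfl, ws, p', heq ▸ RE.PosSeq.starCons hu hw, rfl⟩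
      · rcases List.eq_nil_or_concat u with rfl | ⟨us, q, rfl⟩
        · exact absurd heq (by simp)
        · have hp' : p' = Dir.L :: q := by
            have h2 : us.map (Dir.L :: ·) ++ [Dir.L :: q] = ws ++ [p'] := by
              simpa using heq
            exact (concat_eq_concat h2).symm
          subst hp'
          obtain ⟨he, hd'⟩ := List.cons_prefix_cons.mp hd
          subst he
          obtain ⟨r', hr', ws', p'', hps, hq⟩ := ihu us q List.concat_eq_append d' hd'
          exact ⟨r', hr', ws', p'', hps, by simp [hq]⟩
    · have hp' : p' = q := by
        have h2 : (u.map (Dir.L :: ·) ++ ws2) ++ [q] = ws ++ [p'] := by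
          simpa using heq
        exact (concat_eq_concat h2).symm
      subst hp'
      exact ihw ws2 p' List.concat_eq_append d hd

/-- For any position `p` of `R`, `lastextent(p)` is a path in the parse tree from `p`
to an ancestor of `p`: every member of `lastextent(p)` is an ancestor of `p`,
`p ∈ last(p)`, and if `v ∈ lastextent(p)` and `w` is any node between `p` and `v`
(an ancestor of `p` and a descendant of `v`), then `w ∈ lastextent(p)`. -/
theorem lastExtent_is_path {α : Type} (R : RE α) (p : TreePath) (hp : R.IsPos p) :
    (∀ v ∈ R.lastExtent p, v <+: p) ∧
    p ∈ R.lastExtent p ∧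
    (∀ v w : TreePath, v ∈ R.lastExtent p → v <+: w → w <+: p →
      w ∈ R.lastExtent p) := by
  obtain ⟨a, ha⟩ := hp
  have hsub : R.sub p = some (.ch a) := by
    unfold RE.labelOf at ha
    rcases h : R.sub p with _ | r
    · rw [h] at ha; exact absurd ha (by simp)
    · rw [h] at ha
      cases r <;> simp_all
  refine ⟨?_, ?_, ?_⟩
  · rintro v ⟨r, hr, ws, p', hps, rfl⟩
    exact List.prefix_append v p'
  · exact ⟨.ch a, hsub, [], [], RE.PosSeq.ch a, by simp⟩
  · rintro v w ⟨r, hr, ws, p', hps, rfl⟩ hvw hwp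
    obtain ⟨d, rfl⟩ := hvw
    have hd : d <+: p' := by
      obtain ⟨t, ht⟩ := hwp
      exact ⟨t, by simpa using ht⟩
    obtain ⟨r', hr', ws', p'', hps', rfl⟩ := RE.posSeq_last_sub hps ws p' rfl d hd
    exact ⟨r', by rw [RE.sub_append_s2 v R r d hr]; exact hr', ws', p'', hps', by simp⟩
end

section
/- Let u and v be nodes of the parse tree of R such that u is an ancestor of v. If v ∈ firstextent(p) for some p ∈ first(u), then first(v) ⊆ first(u). -/
/-!
If a first position of `R(u)` passes through the descendant `v`, then at every `⊙`-node on
the path from `u` to `v` where the path turns right the left operand accepts the empty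
sequence, and where it turns left the right operand accepts some sequence; unions and stars
impose nothing. These witnesses do not depend on which position below `v` is chosen, so every
first position of `R(v)` extends to a first position of `R(u)`.
-/

namespace RE

variable {α : Type}

theorem sub_append_s3 {R r : RE α} {u : TreePath} (h : R.sub u = some r) (t : TreePath) :
    R.sub (u ++ t) = r.sub t := by
  induction u generalizing R with
  | nil =>
    simp only [sub, Option.some_inj] at h
    simp [h]
  | cons d u ih =>
    cases R <;> cases d <;> first | exact ih h | simp [sub] at h

def IsFirstPos (r : RE α) (p : TreePath) : Prop := ∃ w, PosSeq r (p :: w)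

theorem mem_firstSet_iff {R r : RE α} {u : TreePath} (h : R.sub u = some r) {x : TreePath} :
    x ∈ R.firstSet u ↔ ∃ p, r.IsFirstPos p ∧ x = u ++ p := by
  simp only [firstSet, IsFirstPos, h, Option.some_inj, exists_eq_left']
  grind

theorem not_isFirstPos_cons_eps {d : Dir} {x : TreePath} :
    ¬ (eps : RE α).IsFirstPos (d :: x) := by
  rintro ⟨w, h⟩
  cases h

theorem not_isFirstPos_cons_ch {a : α} {d : Dir} {x : TreePath} :
    ¬ (ch a).IsFirstPos (d :: x) := by
  rintro ⟨w, h⟩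
  cases h

theorem IsFirstPos.cat_inv {r s : RE α} {d : Dir} {x : TreePath}
    (h : (cat r s).IsFirstPos (d :: x)) :
    (d = .L ∧ r.IsFirstPos x ∧ ∃ w, PosSeq s w) ∨
      (d = .R ∧ PosSeq r [] ∧ s.IsFirstPos x) := by
  obtain ⟨w, h⟩ := h
  generalize hl : (d :: x) :: w = l at h
  cases h with
  | @cat _ _ u v hu hv =>
    rcases u with _ | ⟨u₀, u⟩
    · rcases v with _ | ⟨v₀, v⟩
      · simp at hl
      · simp only [List.map_nil, List.nil_append, List.map_cons, List.cons.injEq] at hl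
        obtain ⟨⟨rfl, rfl⟩, -⟩ := hl
        exact .inr ⟨rfl, hu, v, hv⟩
    · simp only [List.map_cons, List.cons_append, List.cons.injEq] at hl
      obtain ⟨⟨rfl, rfl⟩, -⟩ := hl
      exact .inl ⟨rfl, ⟨u, hu⟩, v, hv⟩

theorem IsFirstPos.alt_inv {r s : RE α} {d : Dir} {x : TreePath}
    (h : (alt r s).IsFirstPos (d :: x)) :
    (d = .L ∧ r.IsFirstPos x) ∨ (d = .R ∧ s.IsFirstPos x) := by
  obtain ⟨w, h⟩ := h
  generalize hl : (d :: x) :: w = l at h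
  cases h with
  | @altL _ _ u hu =>
    rcases u with _ | ⟨u₀, u⟩
    · simp at hl
    · simp only [List.map_cons, List.cons.injEq] at hl
      obtain ⟨⟨rfl, rfl⟩, -⟩ := hl
      exact .inl ⟨rfl, u, hu⟩
  | @altR _ _ v hv =>
    rcases v with _ | ⟨v₀, v⟩
    · simp at hl
    · simp only [List.map_cons, List.cons.injEq] at hl
      obtain ⟨⟨rfl, rfl⟩, -⟩ := hl
      exact .inr ⟨rfl, v, hv⟩

theorem IsFirstPos.star_inv {r : RE α} {d : Dir} {x : TreePath}
    (h : (star r).IsFirstPos (d :: x)) : d = .L ∧ r.IsFirstPos x := by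
  obtain ⟨w, h⟩ := h
  generalize hr : star r = r' at h
  generalize hl : (d :: x) :: w = l at h
  induction h generalizing w with
  | starNil => simp at hl
  | @starCons _ u _ hu _ _ ih =>
    cases hr
    rcases u with _ | ⟨u₀, u⟩
    · exact ih w rfl hl
    · simp only [List.map_cons, List.cons_append, List.cons.injEq] at hl
      obtain ⟨⟨rfl, rfl⟩, -⟩ := hl
      exact ⟨rfl, u, hu⟩
  | _ => cases hr

theorem IsFirstPos.exists_child {r : RE α} {d : Dir} {x : TreePath}
    (h : r.IsFirstPos (d :: x)) : ∃ c, r.sub [d] = some c ∧ c.IsFirstPos x ∧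
      ∀ y, c.IsFirstPos y → r.IsFirstPos (d :: y) := by
  cases r with
  | eps => exact absurd h not_isFirstPos_cons_eps
  | ch a => exact absurd h not_isFirstPos_cons_ch
  | cat r s =>
    rcases h.cat_inv with ⟨rfl, hx, w, hs⟩ | ⟨rfl, hr, hx⟩
    · refine ⟨r, by simp [sub], hx, fun y ⟨t, ht⟩ => ?_⟩
      refine ⟨t.map (Dir.L :: ·) ++ w.map (Dir.R :: ·), ?_⟩
      simpa using PosSeq.cat ht hs
    · refine ⟨s, by simp [sub], hx, fun y ⟨t, ht⟩ => ⟨t.map (Dir.R :: ·), ?_⟩⟩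
      simpa using PosSeq.cat hr ht
  | alt r s =>
    rcases h.alt_inv with ⟨rfl, hx⟩ | ⟨rfl, hx⟩
    · refine ⟨r, by simp [sub], hx, fun y ⟨t, ht⟩ => ⟨t.map (Dir.L :: ·), ?_⟩⟩
      simpa using PosSeq.altL (s := s) ht
    · refine ⟨s, by simp [sub], hx, fun y ⟨t, ht⟩ => ⟨t.map (Dir.R :: ·), ?_⟩⟩
      simpa using PosSeq.altR (r := r) ht
  | star r =>
    obtain ⟨rfl, hx⟩ := h.star_inv
    refine ⟨r, by simp [sub], hx, fun y ⟨t, ht⟩ => ⟨t.map (Dir.L :: ·), ?_⟩⟩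
    simpa using PosSeq.starCons ht (PosSeq.starNil (r := r))

theorem IsFirstPos.append_of_sub {r s : RE α} {v p q : TreePath} (hs : r.sub v = some s)
    (hp : r.IsFirstPos (v ++ p)) (hq : s.IsFirstPos q) : r.IsFirstPos (v ++ q) := by
  induction v generalizing r with
  | nil =>
    simp only [sub, Option.some_inj] at hs
    exact hs ▸ hq
  | cons d v ih =>
    obtain ⟨c, hc, hcp, lift⟩ := IsFirstPos.exists_child hp
    exact lift _ (ih (by rwa [← sub_append_s3 hc]) hcp)

end RE

/-- If `u` is an ancestor of `v` and `v ∈ firstextent(p)` for some `p ∈ first(u)`,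
then `first(v) ⊆ first(u)`. -/
theorem first_subset_of_firstExtent {α : Type} (R : RE α) (u v : TreePath)
    (hanc : u <+: v) (p : TreePath) (hp : p ∈ R.firstSet u)
    (hv : v ∈ R.firstExtent p) :
    R.firstSet v ⊆ R.firstSet u := by
  obtain ⟨v', rfl⟩ := hanc
  obtain ⟨ru, hru, p', w, hpw, rfl⟩ := hp
  obtain ⟨rv, hrv, p'', -, -, hpp⟩ := hv
  obtain rfl : p' = v' ++ p'' := by simpa using hpp
  have hsub : ru.sub v' = some rv := by rwa [← RE.sub_append_s3 hru]
  intro x hx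
  obtain ⟨q, hq, rfl⟩ := (RE.mem_firstSet_iff hrv).1 hx
  exact (RE.mem_firstSet_iff hru).2
    ⟨v' ++ q, RE.IsFirstPos.append_of_sub hsub ⟨w, hpw⟩ hq, by simp⟩
end

section
/- Let p ∈ Pos(R), let q ∈ Pos_α(R), and let v = lca(p,q). Then q ∈ δ(p,α) if and only if either (i) v is a ⊙-node, left(v) ∈ lastextent(p), and right(v) ∈ firstextent(q), or (ii) parent*(v) exists and parent*(v) ∈ lastextent(p) ∩ firstextent(q). -/
/-! ### Auxiliary development for the characterization theorem -/

namespace REProof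

open RE

variable {α : Type}

/-- Splitting an adjacency across a list append. -/
lemma adj_split {γ : Type _} {x y : γ} :
    ∀ {w₁ : List γ} {A B w₂ : List γ}, w₁ ++ x :: y :: w₂ = A ++ B →
      (∃ a₁ a₂, A = a₁ ++ x :: y :: a₂) ∨
      (∃ a₁, A = a₁ ++ [x] ∧ ∃ b₂, B = y :: b₂) ∨
      (∃ b₁ b₂, B = b₁ ++ x :: y :: b₂) := by
  intro w₁ A
  induction A generalizing w₁ with
  | nil =>
    intro B w₂ h
    right; right
    exact ⟨w₁, w₂, by simpa using h.symm⟩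
  | cons a A ih =>
    intro B w₂ h
    cases w₁ with
    | nil =>
      simp only [List.nil_append, List.cons_append, List.cons.injEq] at h
      obtain ⟨rfl, h2⟩ := h
      cases A with
      | nil =>
        right; left
        refine ⟨[], by simp, w₂, ?_⟩
        simpa using h2.symm
      | cons a' A' =>
        simp only [List.cons_append, List.cons.injEq] at h2
        obtain ⟨rfl, _⟩ := h2
        left; exact ⟨[], A', by simp⟩
    | cons c w₁' =>
      simp only [List.cons_append, List.cons.injEq] at h
      obtain ⟨rfl, h2⟩ := h
      rcases ih h2 with ⟨a₁, a₂, rfl⟩ | ⟨a₁, rfl, b₂, hB⟩ | hright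
      · left; exact ⟨c :: a₁, a₂, by simp⟩
      · right; left; exact ⟨c :: a₁, by simp, b₂, hB⟩
      · right; right; exact hright
  
lemma map_eq_adj {γ δ : Type _} {f : γ → δ} :
    ∀ {u : List γ} {w₁ : List δ} {x y : δ} {w₂ : List δ}, u.map f = w₁ ++ x :: y :: w₂ →
      ∃ v₁ x' y' v₂, u = v₁ ++ x' :: y' :: v₂ ∧ f x' = x ∧ f y' = y := by
  intro u
  induction u with
  | nil => intro w₁ x y w₂ h; simp at h
  | cons a u ih =>
    intro w₁ x y w₂ h
    cases w₁ with
    | nil =>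
      simp only [List.map_cons, List.nil_append, List.cons.injEq] at h
      obtain ⟨rfl, h2⟩ := h
      cases u with
      | nil => simp at h2
      | cons b u' =>
        simp only [List.map_cons, List.cons.injEq] at h2
        exact ⟨[], a, b, u', by simp, rfl, h2.1⟩
    | cons c w₁' =>
      simp only [List.map_cons, List.cons_append, List.cons.injEq] at h
      obtain ⟨rfl, h2⟩ := h
      obtain ⟨v₁, x', y', v₂, rfl, hx, hy⟩ := ih h2
      exact ⟨a :: v₁, x', y', v₂, by simp, hx, hy⟩

lemma map_eq_concat {γ δ : Type _} {f : γ → δ} :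
    ∀ {u : List γ} {w : List δ} {x : δ}, u.map f = w ++ [x] →
      ∃ v x', u = v ++ [x'] ∧ f x' = x := by
  intro u
  induction u with
  | nil => intro w x h; simp at h
  | cons a u ih =>
    intro w x h
    cases w with
    | nil =>
      simp only [List.map_cons, List.nil_append, List.cons.injEq] at h
      obtain ⟨rfl, h2⟩ := h
      have : u = [] := by simpa using congrArg List.length h2
      exact ⟨[], a, by simp [this], rfl⟩
    | cons c w' =>
      simp only [List.map_cons, List.cons_append, List.cons.injEq] at h
      obtain ⟨rfl, h2⟩ := h
      obtain ⟨v, x', rfl, hx⟩ := ih h2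
      exact ⟨a :: v, x', by simp, hx⟩

lemma map_eq_cons {γ δ : Type _} {f : γ → δ} {u : List γ} {x : δ} {w : List δ}
    (h : u.map f = x :: w) : ∃ x' u', u = x' :: u' ∧ f x' = x := by
  cases u with
  | nil => simp at h
  | cons a u' =>
    simp only [List.map_cons, List.cons.injEq] at h
    exact ⟨a, u', rfl, h.1⟩

lemma concat_last_eq {γ : Type _} {A B : List γ} {x y : γ} (h : A ++ [x] = B ++ [y]) :
    x = y ∧ A = B := by
  have h' := congrArg List.reverse h
  simp only [List.reverse_append, List.reverse_cons, List.reverse_nil, List.nil_append,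
    List.singleton_append, List.cons.injEq] at h'
  exact ⟨h'.1, List.reverse_injective h'.2⟩

lemma flatten_first {γ : Type _} :
    ∀ {l : List (List γ)} {q : γ} {w : List γ}, l.flatten = q :: w →
      ∃ c ∈ l, ∃ w', c = q :: w' := by
  intro l
  induction l with
  | nil => intro q w h; simp at h
  | cons c l ih =>
    intro q w h
    rw [List.flatten_cons] at h
    cases c with
    | nil =>
      simp only [List.nil_append] at h
      obtain ⟨c', hc', w', hw'⟩ := ih h
      exact ⟨c', List.mem_cons_of_mem _ hc', w', hw'⟩
    | cons a c' =>
      simp only [List.cons_append, List.cons.injEq] at h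
      exact ⟨a :: c', List.mem_cons_self, c', by rw [h.1]⟩

lemma flatten_last {γ : Type _} :
    ∀ {l : List (List γ)} {p : γ} {w : List γ}, l.flatten = w ++ [p] →
      ∃ c ∈ l, ∃ w', c = w' ++ [p] := by
  intro l
  induction l with
  | nil => intro p w h; simp at h
  | cons c l ih =>
    intro p w h
    rw [List.flatten_cons] at h
    rcases List.eq_nil_or_concat l.flatten with hf | ⟨w₂, x, hf⟩
    · rw [hf, List.append_nil] at h
      exact ⟨c, List.mem_cons_self, w, h⟩
    · rw [List.concat_eq_append] at hf
      rw [hf, ← List.append_assoc] at h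
      obtain ⟨hxp, -⟩ := concat_last_eq h
      subst hxp
      obtain ⟨c', hc', w', hw'⟩ := ih hf
      exact ⟨c', List.mem_cons_of_mem _ hc', w', hw'⟩

lemma flatten_adj {γ : Type _} :
    ∀ {l : List (List γ)} {x y : γ} {w₁ w₂ : List γ}, l.flatten = w₁ ++ x :: y :: w₂ →
      (∃ c ∈ l, ∃ a b, c = a ++ x :: y :: b) ∨
      ((∃ c ∈ l, ∃ a, c = a ++ [x]) ∧ (∃ c ∈ l, ∃ b, c = y :: b)) := by
  intro l
  induction l with
  | nil => intro x y w₁ w₂ h; simp at h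
  | cons c l ih =>
    intro x y w₁ w₂ h
    rw [List.flatten_cons] at h
    rcases adj_split h.symm with ⟨a₁, a₂, hc⟩ | ⟨a₁, hc, b₂, hB⟩ | ⟨b₁, b₂, hB⟩
    · left; exact ⟨c, List.mem_cons_self, a₁, a₂, hc⟩
    · right
      obtain ⟨c', hc', w', hw'⟩ := flatten_first hB
      exact ⟨⟨c, List.mem_cons_self, a₁, hc⟩,
        ⟨c', List.mem_cons_of_mem _ hc', w', hw'⟩⟩
    · rcases ih hB with ⟨c', hc', r⟩ | ⟨⟨c₁, hc₁, r₁⟩, ⟨c₂, hc₂, r₂⟩⟩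
      · left; exact ⟨c', List.mem_cons_of_mem _ hc', r⟩
      · right
        exact ⟨⟨c₁, List.mem_cons_of_mem _ hc₁, r₁⟩, ⟨c₂, List.mem_cons_of_mem _ hc₂, r₂⟩⟩

/-! ### Basic predicates -/

/-- `p` is a possible last position of `r`. -/
def Lst (r : RE α) (p : TreePath) : Prop := ∃ w, PosSeq r (w ++ [p])

/-- `q` is a possible first position of `r`. -/
def Fst (r : RE α) (q : TreePath) : Prop := ∃ w, PosSeq r (q :: w)

/-- `q` can follow `p` in a position sequence of `r`. -/
def Fol (r : RE α) (p q : TreePath) : Prop := ∃ w₁ w₂, PosSeq r (w₁ ++ p :: q :: w₂)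

lemma exists_posSeq (r : RE α) : ∃ w, PosSeq r w := by
  induction r with
  | eps => exact ⟨[], .eps⟩
  | ch a => exact ⟨[[]], .ch a⟩
  | cat r s ihr ihs =>
    obtain ⟨u, hu⟩ := ihr; obtain ⟨v, hv⟩ := ihs
    exact ⟨_, .cat hu hv⟩
  | alt r s ihr ihs =>
    obtain ⟨u, hu⟩ := ihr
    exact ⟨_, .altL hu⟩
  | star r ih => exact ⟨[], .starNil⟩

lemma posSeq_eps_inv {W : List TreePath} (h : PosSeq (.eps : RE α) W) : W = [] := by
  cases h; rfl

lemma posSeq_ch_inv {a : α} {W : List TreePath} (h : PosSeq (.ch a) W) : W = [[]] := by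
  cases h; rfl

lemma posSeq_cat_inv {r s : RE α} {W : List TreePath} (h : PosSeq (.cat r s) W) :
    ∃ u v, PosSeq r u ∧ PosSeq s v ∧ W = u.map (Dir.L :: ·) ++ v.map (Dir.R :: ·) := by
  cases h with
  | cat hu hv => exact ⟨_, _, hu, hv, rfl⟩

lemma posSeq_alt_inv {r s : RE α} {W : List TreePath} (h : PosSeq (.alt r s) W) :
    (∃ u, PosSeq r u ∧ W = u.map (Dir.L :: ·)) ∨
    (∃ v, PosSeq s v ∧ W = v.map (Dir.R :: ·)) := by
  cases h with
  | altL hu => exact Or.inl ⟨_, hu, rfl⟩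
  | altR hv => exact Or.inr ⟨_, hv, rfl⟩

lemma posSeq_star_iff {r : RE α} {W : List TreePath} :
    PosSeq (.star r) W ↔
      ∃ l : List (List TreePath), (∀ u ∈ l, PosSeq r u) ∧
        W = (l.map (List.map (Dir.L :: ·))).flatten := by
  constructor
  · intro h
    generalize hE : RE.star r = E at h
    induction h with
    | eps => exact absurd hE (by simp)
    | ch a => exact absurd hE (by simp)
    | cat hu hv => exact absurd hE (by simp)
    | altL hu => exact absurd hE (by simp)
    | altR hv => exact absurd hE (by simp)
    | starNil => exact ⟨[], by simp, by simp⟩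
    | @starCons r' u w hu hw ihu ihw =>
      obtain rfl : r = r' := by injection hE
      obtain ⟨l, hl, rfl⟩ := ihw rfl
      refine ⟨u :: l, ?_, by simp⟩
      intro c hc
      rcases List.mem_cons.1 hc with rfl | hc
      · exact hu
      · exact hl c hc
  · rintro ⟨l, hl, rfl⟩
    induction l with
    | nil => simpa using PosSeq.starNil
    | cons c l ih =>
      simp only [List.map_cons, List.flatten_cons]
      exact PosSeq.starCons (hl c (List.mem_cons_self))
        (ih fun u hu => hl u (List.mem_cons_of_mem _ hu))

/-! ### Inversion / characterization of `Fst`, `Lst`, `Fol` per constructor -/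

lemma fst_star_iff {r : RE α} {q : TreePath} :
    Fst (.star r) q ↔ ∃ q', q = Dir.L :: q' ∧ Fst r q' := by
  constructor
  · rintro ⟨w, h⟩
    rw [posSeq_star_iff] at h
    obtain ⟨l, hl, hW⟩ := h
    obtain ⟨c, hc, w', hw'⟩ := flatten_first hW.symm
    obtain ⟨u, hu, rfl⟩ := List.mem_map.1 hc
    obtain ⟨q'', u', rfl, hq⟩ := map_eq_cons hw'
    exact ⟨q'', hq.symm, u', hl _ hu⟩
  · rintro ⟨q', rfl, w, h⟩
    have h' := PosSeq.starCons h PosSeq.starNil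
    exact ⟨w.map (Dir.L :: ·), by simpa using h'⟩

lemma lst_star_iff {r : RE α} {p : TreePath} :
    Lst (.star r) p ↔ ∃ p', p = Dir.L :: p' ∧ Lst r p' := by
  constructor
  · rintro ⟨w, h⟩
    rw [posSeq_star_iff] at h
    obtain ⟨l, hl, hW⟩ := h
    obtain ⟨c, hc, w', hw'⟩ := flatten_last hW.symm
    obtain ⟨u, hu, rfl⟩ := List.mem_map.1 hc
    obtain ⟨v, p'', rfl, hp⟩ := map_eq_concat hw'
    exact ⟨p'', hp.symm, v, hl _ hu⟩
  · rintro ⟨p', rfl, w, h⟩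
    have h' := PosSeq.starCons h PosSeq.starNil
    exact ⟨w.map (Dir.L :: ·), by simpa using h'⟩

lemma fst_cat_L {r s : RE α} {q : TreePath} (h : Fst (.cat r s) (Dir.L :: q)) : Fst r q := by
  obtain ⟨w, hw⟩ := h
  obtain ⟨u, v, hu, hv, hW⟩ := posSeq_cat_inv hw
  cases u with
  | nil =>
    simp only [List.map_nil, List.nil_append] at hW
    obtain ⟨q', v', rfl, hq⟩ := map_eq_cons hW.symm
    simp at hq
  | cons a u' =>
    simp only [List.map_cons, List.cons_append, List.cons.injEq] at hW
    obtain ⟨ha, -⟩ := hW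
    obtain rfl : q = a := by simpa using ha
    exact ⟨u', hu⟩

lemma fst_cat_R {r s : RE α} {q : TreePath} (h : Fst (.cat r s) (Dir.R :: q)) : Fst s q := by
  obtain ⟨w, hw⟩ := h
  obtain ⟨u, v, hu, hv, hW⟩ := posSeq_cat_inv hw
  cases u with
  | nil =>
    simp only [List.map_nil, List.nil_append] at hW
    obtain ⟨q', v', rfl, hq⟩ := map_eq_cons hW.symm
    obtain rfl : q' = q := by simpa using hq
    exact ⟨v', hv⟩
  | cons a u' =>
    simp only [List.map_cons, List.cons_append, List.cons.injEq] at hW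
    obtain ⟨ha, -⟩ := hW
    simp at ha

lemma lst_cat_L {r s : RE α} {p : TreePath} (h : Lst (.cat r s) (Dir.L :: p)) : Lst r p := by
  obtain ⟨w, hw⟩ := h
  obtain ⟨u, v, hu, hv, hW⟩ := posSeq_cat_inv hw
  cases v with
  | nil =>
    simp only [List.map_nil, List.append_nil] at hW
    obtain ⟨v', p', rfl, hp⟩ := map_eq_concat hW.symm
    obtain rfl : p' = p := by simpa using hp
    exact ⟨v', hu⟩
  | cons b v' =>
    rcases List.eq_nil_or_concat (b :: v') with hnil | ⟨v₂, x, hcc⟩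
    · simp at hnil
    · rw [hcc] at hW
      rw [List.concat_eq_append, List.map_append, ← List.append_assoc] at hW
      simp only [List.map_cons, List.map_nil] at hW
      obtain ⟨hx, -⟩ := concat_last_eq hW
      simp at hx

lemma lst_cat_R {r s : RE α} {p : TreePath} (h : Lst (.cat r s) (Dir.R :: p)) : Lst s p := by
  obtain ⟨w, hw⟩ := h
  obtain ⟨u, v, hu, hv, hW⟩ := posSeq_cat_inv hw
  cases v with
  | nil =>
    simp only [List.map_nil, List.append_nil] at hW
    obtain ⟨v', p', rfl, hp⟩ := map_eq_concat hW.symm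
    simp at hp
  | cons b v' =>
    rcases List.eq_nil_or_concat (b :: v') with hnil | ⟨v₂, x, hcc⟩
    · simp at hnil
    · rw [hcc] at hW
      rw [List.concat_eq_append, List.map_append, ← List.append_assoc] at hW
      simp only [List.map_cons, List.map_nil] at hW
      obtain ⟨hx, -⟩ := concat_last_eq hW
      obtain rfl : p = x := by simpa using hx
      refine ⟨v₂, ?_⟩
      rw [hcc, List.concat_eq_append] at hv
      exact hv

lemma fst_alt_L {r s : RE α} {q : TreePath} (h : Fst (.alt r s) (Dir.L :: q)) : Fst r q := by
  obtain ⟨w, hw⟩ := h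
  rcases posSeq_alt_inv hw with ⟨u, hu, hW⟩ | ⟨v, hv, hW⟩
  · obtain ⟨q', u', rfl, hq⟩ := map_eq_cons hW.symm
    obtain rfl : q' = q := by simpa using hq
    exact ⟨u', hu⟩
  · obtain ⟨q', v', rfl, hq⟩ := map_eq_cons hW.symm
    simp at hq

lemma fst_alt_R {r s : RE α} {q : TreePath} (h : Fst (.alt r s) (Dir.R :: q)) : Fst s q := by
  obtain ⟨w, hw⟩ := h
  rcases posSeq_alt_inv hw with ⟨u, hu, hW⟩ | ⟨v, hv, hW⟩
  · obtain ⟨q', u', rfl, hq⟩ := map_eq_cons hW.symm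
    simp at hq
  · obtain ⟨q', v', rfl, hq⟩ := map_eq_cons hW.symm
    obtain rfl : q' = q := by simpa using hq
    exact ⟨v', hv⟩

lemma lst_alt_L {r s : RE α} {p : TreePath} (h : Lst (.alt r s) (Dir.L :: p)) : Lst r p := by
  obtain ⟨w, hw⟩ := h
  rcases posSeq_alt_inv hw with ⟨u, hu, hW⟩ | ⟨v, hv, hW⟩
  · obtain ⟨v', p', rfl, hp⟩ := map_eq_concat hW.symm
    obtain rfl : p' = p := by simpa using hp
    exact ⟨v', hu⟩
  · obtain ⟨v', p', rfl, hp⟩ := map_eq_concat hW.symm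
    simp at hp

lemma lst_alt_R {r s : RE α} {p : TreePath} (h : Lst (.alt r s) (Dir.R :: p)) : Lst s p := by
  obtain ⟨w, hw⟩ := h
  rcases posSeq_alt_inv hw with ⟨u, hu, hW⟩ | ⟨v, hv, hW⟩
  · obtain ⟨v', p', rfl, hp⟩ := map_eq_concat hW.symm
    simp at hp
  · obtain ⟨v', p', rfl, hp⟩ := map_eq_concat hW.symm
    obtain rfl : p' = p := by simpa using hp
    exact ⟨v', hv⟩

lemma fol_cat {r s : RE α} {p q : TreePath} :
    Fol (.cat r s) p q ↔
      (∃ p' q', p = Dir.L :: p' ∧ q = Dir.L :: q' ∧ Fol r p' q') ∨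
      (∃ p' q', p = Dir.R :: p' ∧ q = Dir.R :: q' ∧ Fol s p' q') ∨
      (∃ p' q', p = Dir.L :: p' ∧ q = Dir.R :: q' ∧ Lst r p' ∧ Fst s q') := by
  constructor
  · rintro ⟨w₁, w₂, h⟩
    obtain ⟨u, v, hu, hv, hW⟩ := posSeq_cat_inv h
    rcases adj_split hW with ⟨a₁, a₂, hA⟩ | ⟨a₁, hA, b₂, hB⟩ | ⟨b₁, b₂, hB⟩
    · obtain ⟨v₁, p', q', v₂, rfl, hp, hq⟩ := map_eq_adj hA
      exact Or.inl ⟨p', q', hp.symm, hq.symm, v₁, v₂, hu⟩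
    · obtain ⟨v', p', rfl, hp⟩ := map_eq_concat hA
      obtain ⟨q', v'', rfl, hq⟩ := map_eq_cons hB
      exact Or.inr (Or.inr ⟨p', q', hp.symm, hq.symm, ⟨v', hu⟩, ⟨v'', hv⟩⟩)
    · obtain ⟨v₁, p', q', v₂, rfl, hp, hq⟩ := map_eq_adj hB
      exact Or.inr (Or.inl ⟨p', q', hp.symm, hq.symm, v₁, v₂, hv⟩)
  · rintro (⟨p', q', rfl, rfl, w₁, w₂, h⟩ | ⟨p', q', rfl, rfl, w₁, w₂, h⟩ |
      ⟨p', q', rfl, rfl, ⟨w, h1⟩, ⟨w', h2⟩⟩)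
    · obtain ⟨v, hv⟩ := exists_posSeq s
      have h' := PosSeq.cat h hv
      exact ⟨w₁.map (Dir.L :: ·), w₂.map (Dir.L :: ·) ++ v.map (Dir.R :: ·),
        by simpa [List.map_append, List.append_assoc] using h'⟩
    · obtain ⟨u, hu⟩ := exists_posSeq r
      have h' := PosSeq.cat hu h
      exact ⟨u.map (Dir.L :: ·) ++ w₁.map (Dir.R :: ·), w₂.map (Dir.R :: ·),
        by simpa [List.map_append, List.append_assoc] using h'⟩
    · have h' := PosSeq.cat h1 h2
      exact ⟨w.map (Dir.L :: ·), w'.map (Dir.R :: ·),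
        by simpa [List.map_append, List.append_assoc] using h'⟩

lemma fol_alt {r s : RE α} {p q : TreePath} :
    Fol (.alt r s) p q ↔
      (∃ p' q', p = Dir.L :: p' ∧ q = Dir.L :: q' ∧ Fol r p' q') ∨
      (∃ p' q', p = Dir.R :: p' ∧ q = Dir.R :: q' ∧ Fol s p' q') := by
  constructor
  · rintro ⟨w₁, w₂, h⟩
    rcases posSeq_alt_inv h with ⟨u, hu, hW⟩ | ⟨v, hv, hW⟩
    · obtain ⟨v₁, p', q', v₂, rfl, hp, hq⟩ := map_eq_adj hW.symm
      exact Or.inl ⟨p', q', hp.symm, hq.symm, v₁, v₂, hu⟩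
    · obtain ⟨v₁, p', q', v₂, rfl, hp, hq⟩ := map_eq_adj hW.symm
      exact Or.inr ⟨p', q', hp.symm, hq.symm, v₁, v₂, hv⟩
  · rintro (⟨p', q', rfl, rfl, w₁, w₂, h⟩ | ⟨p', q', rfl, rfl, w₁, w₂, h⟩)
    · have h' := PosSeq.altL (s := s) h
      exact ⟨w₁.map (Dir.L :: ·), w₂.map (Dir.L :: ·),
        by simpa [List.map_append] using h'⟩
    · have h' := PosSeq.altR (r := r) h
      exact ⟨w₁.map (Dir.R :: ·), w₂.map (Dir.R :: ·),
        by simpa [List.map_append] using h'⟩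

lemma fol_star {r : RE α} {p q : TreePath} :
    Fol (.star r) p q ↔
      ∃ p' q', p = Dir.L :: p' ∧ q = Dir.L :: q' ∧
        (Fol r p' q' ∨ (Lst r p' ∧ Fst r q')) := by
  constructor
  · rintro ⟨w₁, w₂, h⟩
    rw [posSeq_star_iff] at h
    obtain ⟨l, hl, hW⟩ := h
    rcases flatten_adj hW.symm with ⟨c, hc, a, b, hcab⟩ | ⟨⟨c₁, hc₁, a, ha⟩, ⟨c₂, hc₂, b, hb⟩⟩
    · obtain ⟨u, hu, rfl⟩ := List.mem_map.1 hc
      obtain ⟨v₁, p', q', v₂, rfl, hp, hq⟩ := map_eq_adj hcab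
      exact ⟨p', q', hp.symm, hq.symm, Or.inl ⟨v₁, v₂, hl _ hu⟩⟩
    · obtain ⟨u₁, hu₁, rfl⟩ := List.mem_map.1 hc₁
      obtain ⟨v', p', rfl, hp⟩ := map_eq_concat ha
      obtain ⟨u₂, hu₂, rfl⟩ := List.mem_map.1 hc₂
      obtain ⟨q', v'', rfl, hq⟩ := map_eq_cons hb
      exact ⟨p', q', hp.symm, hq.symm, Or.inr ⟨⟨v', hl _ hu₁⟩, ⟨v'', hl _ hu₂⟩⟩⟩
  · rintro ⟨p', q', rfl, rfl, (⟨w₁, w₂, h⟩ | ⟨⟨w, h1⟩, ⟨w', h2⟩⟩)⟩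
    · have h' := PosSeq.starCons h PosSeq.starNil
      exact ⟨w₁.map (Dir.L :: ·), w₂.map (Dir.L :: ·),
        by simpa [List.map_append] using h'⟩
    · have h' := PosSeq.starCons h1 (PosSeq.starCons h2 PosSeq.starNil)
      exact ⟨w.map (Dir.L :: ·), w'.map (Dir.L :: ·),
        by simpa [List.map_append, List.append_assoc] using h'⟩

/-! ### Lifting membership through one parse-tree step -/

lemma mem_lastSet_nil {r : RE α} {p : TreePath} : p ∈ r.lastSet [] ↔ Lst r p := by
  constructor
  · rintro ⟨r', hr', w, p', h, rfl⟩
    obtain rfl : r' = r := by simpa [RE.sub] using hr'.symm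
    exact ⟨w, h⟩
  · rintro ⟨w, h⟩
    exact ⟨r, by simp [RE.sub], w, p, h, rfl⟩

lemma mem_firstSet_nil {r : RE α} {q : TreePath} : q ∈ r.firstSet [] ↔ Fst r q := by
  constructor
  · rintro ⟨r', hr', q', w, h, rfl⟩
    obtain rfl : r' = r := by simpa [RE.sub] using hr'.symm
    exact ⟨w, h⟩
  · rintro ⟨w, h⟩
    exact ⟨r, by simp [RE.sub], q, w, h, rfl⟩

lemma lastSet_prefix {r : RE α} {v x : TreePath} (h : x ∈ r.lastSet v) : v <+: x := by
  obtain ⟨_, _, _, p', _, rfl⟩ := h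
  exact ⟨p', rfl⟩

lemma firstSet_prefix {r : RE α} {v x : TreePath} (h : x ∈ r.firstSet v) : v <+: x := by
  obtain ⟨_, _, p', _, _, rfl⟩ := h
  exact ⟨p', rfl⟩

section Lift

variable {R r : RE α} {d : Dir}

lemma lift_firstSet (hsub : ∀ v, R.sub (d :: v) = r.sub v) {x v : TreePath} :
    (d :: x) ∈ R.firstSet (d :: v) ↔ x ∈ r.firstSet v := by
  constructor
  · rintro ⟨t, ht, p', w, hs, hx⟩
    rw [hsub] at ht
    rw [List.cons_append] at hx
    obtain ⟨-, rfl⟩ := List.cons.inj hx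
    exact ⟨t, ht, p', w, hs, rfl⟩
  · rintro ⟨t, ht, p', w, hs, rfl⟩
    exact ⟨t, by rw [hsub]; exact ht, p', w, hs, by simp⟩

lemma lift_lastSet (hsub : ∀ v, R.sub (d :: v) = r.sub v) {x v : TreePath} :
    (d :: x) ∈ R.lastSet (d :: v) ↔ x ∈ r.lastSet v := by
  constructor
  · rintro ⟨t, ht, w, p', hs, hx⟩
    rw [hsub] at ht
    rw [List.cons_append] at hx
    obtain ⟨-, rfl⟩ := List.cons.inj hx
    exact ⟨t, ht, w, p', hs, rfl⟩
  · rintro ⟨t, ht, w, p', hs, rfl⟩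
    exact ⟨t, by rw [hsub]; exact ht, w, p', hs, by simp⟩

lemma lift_isCat (hsub : ∀ v, R.sub (d :: v) = r.sub v) {v : TreePath} :
    R.IsCatNode (d :: v) ↔ r.IsCatNode v := by
  unfold RE.IsCatNode
  rw [hsub]

lemma lift_isStar (hsub : ∀ v, R.sub (d :: v) = r.sub v) {v : TreePath} :
    R.IsStarNode (d :: v) ↔ r.IsStarNode v := by
  unfold RE.IsStarNode
  rw [hsub]

lemma lift_isPos (hsub : ∀ v, R.sub (d :: v) = r.sub v) {p : TreePath} :
    R.IsPos (d :: p) ↔ r.IsPos p := by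
  unfold RE.IsPos RE.labelOf
  rw [hsub]

lemma lift_ISA (hsub : ∀ v, R.sub (d :: v) = r.sub v) (hroot : ¬ R.IsStarNode [])
    {v u : TreePath} :
    R.IsLowestStarAnc (d :: v) u ↔ ∃ u', u = d :: u' ∧ r.IsLowestStarAnc v u' := by
  constructor
  · rintro ⟨hpre, hstar, hmax⟩
    cases u with
    | nil => exact absurd hstar hroot
    | cons d' u' =>
      obtain ⟨rfl, hpre'⟩ := List.cons_prefix_cons.1 hpre
      refine ⟨u', rfl, hpre', (lift_isStar hsub).1 hstar, ?_⟩
      intro w hw hws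
      have := hmax (d' :: w) (List.cons_prefix_cons.2 ⟨rfl, hw⟩) ((lift_isStar hsub).2 hws)
      exact (List.cons_prefix_cons.1 this).2
  · rintro ⟨u', rfl, hpre, hstar, hmax⟩
    refine ⟨List.cons_prefix_cons.2 ⟨rfl, hpre⟩, (lift_isStar hsub).2 hstar, ?_⟩
    intro w hw hws
    cases w with
    | nil => exact List.nil_prefix
    | cons d' w' =>
      obtain ⟨rfl, hw'⟩ := List.cons_prefix_cons.1 hw
      exact List.cons_prefix_cons.2 ⟨rfl, hmax w' hw' ((lift_isStar hsub).1 hws)⟩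

end Lift

lemma ISA_star {r : RE α} {v u : TreePath} :
    (RE.star r).IsLowestStarAnc (Dir.L :: v) u ↔
      ((∃ u', u = Dir.L :: u' ∧ r.IsLowestStarAnc v u') ∨
        (u = [] ∧ ∀ w, w <+: v → ¬ r.IsStarNode w)) := by
  have hsub : ∀ v', (RE.star r).sub (Dir.L :: v') = r.sub v' := fun _ => rfl
  constructor
  · rintro ⟨hpre, hstar, hmax⟩
    cases u with
    | nil =>
      refine Or.inr ⟨rfl, fun w hw hws => ?_⟩
      have := hmax (Dir.L :: w) (List.cons_prefix_cons.2 ⟨rfl, hw⟩)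
        ((lift_isStar hsub).2 hws)
      simpa using this
    | cons d' u' =>
      obtain ⟨rfl, hpre'⟩ := List.cons_prefix_cons.1 hpre
      refine Or.inl ⟨u', rfl, hpre', (lift_isStar hsub).1 hstar, ?_⟩
      intro w hw hws
      have := hmax (Dir.L :: w) (List.cons_prefix_cons.2 ⟨rfl, hw⟩) ((lift_isStar hsub).2 hws)
      exact (List.cons_prefix_cons.1 this).2
  · rintro (⟨u', rfl, hpre, hstar, hmax⟩ | ⟨rfl, hno⟩)
    · refine ⟨List.cons_prefix_cons.2 ⟨rfl, hpre⟩, (lift_isStar hsub).2 hstar, ?_⟩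
      intro w hw hws
      cases w with
      | nil => exact List.nil_prefix
      | cons d' w' =>
        obtain ⟨rfl, hw'⟩ := List.cons_prefix_cons.1 hw
        exact List.cons_prefix_cons.2 ⟨rfl, hmax w' hw' ((lift_isStar hsub).1 hws)⟩
    · refine ⟨List.nil_prefix, ⟨r, rfl⟩, ?_⟩
      intro w hw hws
      cases w with
      | nil => exact List.prefix_refl _
      | cons d' w' =>
        obtain ⟨rfl, hw'⟩ := List.cons_prefix_cons.1 hw
        exact absurd ((lift_isStar hsub).1 hws) (hno w' hw')

/-! ### Position shapes -/

lemma isPos_eps {p : TreePath} (h : (RE.eps : RE α).IsPos p) : False := by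
  obtain ⟨a, ha⟩ := h
  cases p with
  | nil => simp [RE.labelOf, RE.sub] at ha
  | cons d p' => cases d <;> simp [RE.labelOf, RE.sub] at ha

lemma isPos_ch {a : α} {p : TreePath} (h : (RE.ch a).IsPos p) : p = [] := by
  obtain ⟨b, hb⟩ := h
  cases p with
  | nil => rfl
  | cons d p' => cases d <;> simp [RE.labelOf, RE.sub] at hb

lemma isPos_cat {r s : RE α} {p : TreePath} (h : (RE.cat r s).IsPos p) :
    (∃ p', p = Dir.L :: p' ∧ r.IsPos p') ∨ (∃ p', p = Dir.R :: p' ∧ s.IsPos p') := by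
  cases p with
  | nil =>
    obtain ⟨a, ha⟩ := h
    simp [RE.labelOf, RE.sub] at ha
  | cons d p' =>
    cases d with
    | L => exact Or.inl ⟨p', rfl, (lift_isPos (fun _ => rfl)).1 h⟩
    | R => exact Or.inr ⟨p', rfl, (lift_isPos (fun _ => rfl)).1 h⟩

lemma isPos_alt {r s : RE α} {p : TreePath} (h : (RE.alt r s).IsPos p) :
    (∃ p', p = Dir.L :: p' ∧ r.IsPos p') ∨ (∃ p', p = Dir.R :: p' ∧ s.IsPos p') := by
  cases p with
  | nil =>
    obtain ⟨a, ha⟩ := h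
    simp [RE.labelOf, RE.sub] at ha
  | cons d p' =>
    cases d with
    | L => exact Or.inl ⟨p', rfl, (lift_isPos (fun _ => rfl)).1 h⟩
    | R => exact Or.inr ⟨p', rfl, (lift_isPos (fun _ => rfl)).1 h⟩

lemma isPos_star {r : RE α} {p : TreePath} (h : (RE.star r).IsPos p) :
    ∃ p', p = Dir.L :: p' ∧ r.IsPos p' := by
  cases p with
  | nil =>
    obtain ⟨a, ha⟩ := h
    simp [RE.labelOf, RE.sub] at ha
  | cons d p' =>
    cases d with
    | L => exact ⟨p', rfl, (lift_isPos (fun _ => rfl)).1 h⟩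
    | R =>
      obtain ⟨a, ha⟩ := h
      simp [RE.labelOf, RE.sub] at ha

/-! ### Propagation of last/first to ancestors -/

lemma lst_prop (r : RE α) : ∀ p v : TreePath, Lst r p → v <+: p → p ∈ r.lastSet v := by
  induction r with
  | eps =>
    intro p v h _
    obtain ⟨w, hw⟩ := h
    have := posSeq_eps_inv hw
    simp at this
  | ch a =>
    intro p v h hv
    obtain ⟨w, hw⟩ := h
    have h1 := posSeq_ch_inv hw
    obtain ⟨rfl, rfl⟩ : w = [] ∧ p = [] := by
      cases w with
      | nil => simpa using h1
      | cons c w' =>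
        exfalso
        have := congrArg List.length h1
        simp at this
    have : v = [] := List.prefix_nil.1 hv
    subst this
    exact mem_lastSet_nil.2 ⟨[], hw⟩
  | cat r s ihr ihs =>
    intro p v h hv
    cases v with
    | nil => exact mem_lastSet_nil.2 h
    | cons d v' =>
      obtain ⟨p₀, hp₀⟩ := hv
      rw [List.cons_append] at hp₀
      subst hp₀
      cases d with
      | L => exact (lift_lastSet (fun _ => rfl)).2 (ihr _ _ (lst_cat_L h) ⟨p₀, rfl⟩)
      | R => exact (lift_lastSet (fun _ => rfl)).2 (ihs _ _ (lst_cat_R h) ⟨p₀, rfl⟩)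
  | alt r s ihr ihs =>
    intro p v h hv
    cases v with
    | nil => exact mem_lastSet_nil.2 h
    | cons d v' =>
      obtain ⟨p₀, hp₀⟩ := hv
      rw [List.cons_append] at hp₀
      subst hp₀
      cases d with
      | L => exact (lift_lastSet (fun _ => rfl)).2 (ihr _ _ (lst_alt_L h) ⟨p₀, rfl⟩)
      | R => exact (lift_lastSet (fun _ => rfl)).2 (ihs _ _ (lst_alt_R h) ⟨p₀, rfl⟩)
  | star r ih =>
    intro p v h hv
    cases v with
    | nil => exact mem_lastSet_nil.2 h
    | cons d v' =>
      obtain ⟨p₀, hp₀⟩ := hv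
      rw [List.cons_append] at hp₀
      subst hp₀
      obtain ⟨p', hp', hlst⟩ := lst_star_iff.1 h
      obtain ⟨rfl, rfl⟩ := List.cons.inj hp'
      exact (lift_lastSet (fun _ => rfl)).2 (ih _ _ hlst ⟨p₀, rfl⟩)

lemma fst_prop (r : RE α) : ∀ q v : TreePath, Fst r q → v <+: q → q ∈ r.firstSet v := by
  induction r with
  | eps =>
    intro q v h _
    obtain ⟨w, hw⟩ := h
    have := posSeq_eps_inv hw
    simp at this
  | ch a =>
    intro q v h hv
    obtain ⟨w, hw⟩ := h
    have h1 := posSeq_ch_inv hw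
    obtain ⟨rfl, rfl⟩ : q = [] ∧ w = [] := by simpa using h1
    have : v = [] := List.prefix_nil.1 hv
    subst this
    exact mem_firstSet_nil.2 ⟨[], hw⟩
  | cat r s ihr ihs =>
    intro q v h hv
    cases v with
    | nil => exact mem_firstSet_nil.2 h
    | cons d v' =>
      obtain ⟨q₀, hq₀⟩ := hv
      rw [List.cons_append] at hq₀
      subst hq₀
      cases d with
      | L => exact (lift_firstSet (fun _ => rfl)).2 (ihr _ _ (fst_cat_L h) ⟨q₀, rfl⟩)
      | R => exact (lift_firstSet (fun _ => rfl)).2 (ihs _ _ (fst_cat_R h) ⟨q₀, rfl⟩)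
  | alt r s ihr ihs =>
    intro q v h hv
    cases v with
    | nil => exact mem_firstSet_nil.2 h
    | cons d v' =>
      obtain ⟨q₀, hq₀⟩ := hv
      rw [List.cons_append] at hq₀
      subst hq₀
      cases d with
      | L => exact (lift_firstSet (fun _ => rfl)).2 (ihr _ _ (fst_alt_L h) ⟨q₀, rfl⟩)
      | R => exact (lift_firstSet (fun _ => rfl)).2 (ihs _ _ (fst_alt_R h) ⟨q₀, rfl⟩)
  | star r ih =>
    intro q v h hv
    cases v with
    | nil => exact mem_firstSet_nil.2 h
    | cons d v' =>
      obtain ⟨q₀, hq₀⟩ := hv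
      rw [List.cons_append] at hq₀
      subst hq₀
      obtain ⟨q', hq', hfst⟩ := fst_star_iff.1 h
      obtain ⟨rfl, rfl⟩ := List.cons.inj hq'
      exact (lift_firstSet (fun _ => rfl)).2 (ih _ _ hfst ⟨q₀, rfl⟩)

/-! ### lcaP and lowest star ancestors -/

lemma lcaP_prefix_left : ∀ p q : TreePath, lcaP p q <+: p := by
  intro p
  induction p with
  | nil => intro q; cases q <;> simp [lcaP]
  | cons a p ih =>
    intro q
    cases q with
    | nil => simp [lcaP]
    | cons b q =>
      by_cases h : a = b
      · subst h
        simpa [lcaP, List.cons_prefix_cons] using ih q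
      · simp [lcaP, h]

lemma lcaP_prefix_right : ∀ p q : TreePath, lcaP p q <+: q := by
  intro p
  induction p with
  | nil => intro q; cases q <;> simp [lcaP]
  | cons a p ih =>
    intro q
    cases q with
    | nil => simp [lcaP]
    | cons b q =>
      by_cases h : a = b
      · subst h
        simpa [lcaP, List.cons_prefix_cons] using ih q
      · simp [lcaP, h]

lemma lcaP_cons (d : Dir) (p q : TreePath) : lcaP (d :: p) (d :: q) = d :: lcaP p q := by
  simp [lcaP]

lemma lcaP_cons_ne {d d' : Dir} (h : d ≠ d') (p q : TreePath) :
    lcaP (d :: p) (d' :: q) = [] := by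
  simp [lcaP, h]

lemma exists_ISA {r : RE α} {v u₀ : TreePath} (h0 : u₀ <+: v) (hs : r.IsStarNode u₀) :
    ∃ u, r.IsLowestStarAnc v u := by
  classical
  have hu₀ : u₀ = v.take u₀.length := List.prefix_iff_eq_take.1 h0
  set P : ℕ → Prop := fun n => r.IsStarNode (v.take n) with hP
  have hlen : u₀.length ≤ v.length := h0.length_le
  have hPu : P u₀.length := by rw [hP]; simpa [← hu₀] using hs
  have hspec : P (Nat.findGreatest P v.length) := Nat.findGreatest_spec hlen hPu
  refine ⟨v.take (Nat.findGreatest P v.length), List.take_prefix _ _, hspec, ?_⟩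
  intro w hw hws
  have hwt : w = v.take w.length := List.prefix_iff_eq_take.1 hw
  have hle : w.length ≤ Nat.findGreatest P v.length :=
    Nat.le_findGreatest hw.length_le (by rw [hP]; simpa [← hwt] using hws)
  rw [hwt, List.prefix_iff_eq_take]
  simp [List.take_take, Nat.min_eq_left, hle, List.length_take, Nat.min_le_left]

/-! ### The main condition and induction -/

/-- The right-hand side of the characterization. -/
def Cond (r : RE α) (p q : TreePath) : Prop :=
  (r.IsCatNode (lcaP p q) ∧ (lcaP p q ++ [Dir.L]) ∈ r.lastExtent p ∧
      (lcaP p q ++ [Dir.R]) ∈ r.firstExtent q) ∨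
  (∃ u, r.IsLowestStarAnc (lcaP p q) u ∧ u ∈ r.lastExtent p ∧ u ∈ r.firstExtent q)

lemma mem_lastExtent {r : RE α} {v p : TreePath} : v ∈ r.lastExtent p ↔ p ∈ r.lastSet v :=
  Iff.rfl

lemma mem_firstExtent {r : RE α} {v q : TreePath} : v ∈ r.firstExtent q ↔ q ∈ r.firstSet v :=
  Iff.rfl

/-- Lifting `Cond` through a `cat`/`alt` node whose explicit constructor makes the root
a non-star node. -/
lemma cond_lift {R r : RE α} {d : Dir} (hsub : ∀ v, R.sub (d :: v) = r.sub v)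
    (hroot : ¬ R.IsStarNode []) {p q : TreePath} :
    Cond R (d :: p) (d :: q) ↔ Cond r p q := by
  unfold Cond
  rw [lcaP_cons]
  constructor
  · rintro (⟨hcat, hlast, hfirst⟩ | ⟨u, hisa, hlast, hfirst⟩)
    · left
      refine ⟨(lift_isCat hsub).1 hcat, ?_, ?_⟩
      · exact (lift_lastSet hsub).1 (by simpa [mem_lastExtent] using hlast)
      · exact (lift_firstSet hsub).1 (by simpa [mem_firstExtent] using hfirst)
    · obtain ⟨u', rfl, hisa'⟩ := (lift_ISA hsub hroot).1 hisa
      right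
      exact ⟨u', hisa', (lift_lastSet hsub).1 hlast, (lift_firstSet hsub).1 hfirst⟩
  · rintro (⟨hcat, hlast, hfirst⟩ | ⟨u, hisa, hlast, hfirst⟩)
    · left
      refine ⟨(lift_isCat hsub).2 hcat, ?_, ?_⟩
      · simpa [mem_lastExtent] using (lift_lastSet hsub).2 hlast
      · simpa [mem_firstExtent] using (lift_firstSet hsub).2 hfirst
    · right
      exact ⟨d :: u, (lift_ISA hsub hroot).2 ⟨u, rfl, hisa⟩,
        (lift_lastSet hsub).2 hlast, (lift_firstSet hsub).2 hfirst⟩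

lemma main (r : RE α) : ∀ p q : TreePath, r.IsPos p → r.IsPos q →
    (Fol r p q ↔ Cond r p q) := by
  induction r with
  | eps => intro p q hp _; exact absurd hp isPos_eps
  | ch a =>
    intro p q hp hq
    obtain rfl := isPos_ch hp
    obtain rfl := isPos_ch hq
    constructor
    · rintro ⟨w₁, w₂, h⟩
      exfalso
      have h1 := posSeq_ch_inv h
      have := congrArg List.length h1
      simp at this
      omega
    · rintro (⟨⟨r', s', hr'⟩, -, -⟩ | ⟨u, ⟨hpre, ⟨r', hr'⟩, -⟩, -, -⟩)
      · exfalso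
        have : lcaP ([] : TreePath) [] = [] := rfl
        rw [this] at hr'
        simp [RE.sub] at hr'
      · exfalso
        have : lcaP ([] : TreePath) [] = [] := rfl
        rw [this] at hpre
        have hu : u = [] := List.prefix_nil.1 hpre
        subst hu
        simp [RE.sub] at hr'
  | cat r s ihr ihs =>
    intro p q hp hq
    have hsubL : ∀ v, (RE.cat r s).sub (Dir.L :: v) = r.sub v := fun _ => rfl
    have hsubR : ∀ v, (RE.cat r s).sub (Dir.R :: v) = s.sub v := fun _ => rfl
    have hroot : ¬ (RE.cat r s).IsStarNode [] := by
      rintro ⟨t, ht⟩; simp [RE.sub] at ht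
    rcases isPos_cat hp with ⟨p', rfl, hp'⟩ | ⟨p', rfl, hp'⟩ <;>
      rcases isPos_cat hq with ⟨q', rfl, hq'⟩ | ⟨q', rfl, hq'⟩
    · -- L L
      rw [cond_lift hsubL hroot, ← ihr p' q' hp' hq']
      rw [fol_cat]
      constructor
      · rintro (⟨p'', q'', hp1, hq1, h⟩ | ⟨p'', q'', hp1, hq1, h⟩ | ⟨p'', q'', hp1, hq1, h⟩)
        · obtain ⟨-, rfl⟩ := List.cons.inj hp1
          obtain ⟨-, rfl⟩ := List.cons.inj hq1
          exact h
        · exact absurd (List.cons.inj hp1).1 (by simp)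
        · exact absurd (List.cons.inj hq1).1 (by simp)
      · intro h
        exact Or.inl ⟨p', q', rfl, rfl, h⟩
    · -- L R : cross case
      rw [fol_cat]
      have hlca : lcaP (Dir.L :: p') (Dir.R :: q') = [] := lcaP_cons_ne (by simp) _ _
      constructor
      · rintro (⟨p'', q'', hp1, hq1, h⟩ | ⟨p'', q'', hp1, hq1, h⟩ | ⟨p'', q'', hp1, hq1, hl, hf⟩)
        · exact absurd (List.cons.inj hq1).1 (by simp)
        · exact absurd (List.cons.inj hp1).1 (by simp)
        · obtain ⟨-, rfl⟩ := List.cons.inj hp1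
          obtain ⟨-, rfl⟩ := List.cons.inj hq1
          left
          rw [hlca]
          refine ⟨⟨r, s, rfl⟩, ?_, ?_⟩
          · exact mem_lastExtent.2 ((lift_lastSet hsubL).2 (mem_lastSet_nil.2 hl))
          · exact mem_firstExtent.2 ((lift_firstSet hsubR).2 (mem_firstSet_nil.2 hf))
      · rintro (⟨-, hlast, hfirst⟩ | ⟨u, ⟨hpre, hstar, -⟩, -, -⟩)
        · rw [hlca] at hlast hfirst
          right; right
          refine ⟨p', q', rfl, rfl, ?_, ?_⟩
          · exact mem_lastSet_nil.1 ((lift_lastSet hsubL).1 (mem_lastExtent.1 hlast))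
          · exact mem_firstSet_nil.1 ((lift_firstSet hsubR).1 (mem_firstExtent.1 hfirst))
        · rw [hlca] at hpre
          obtain rfl := List.prefix_nil.1 hpre
          exact absurd hstar hroot
    · -- R L : impossible on both sides
      have hlca : lcaP (Dir.R :: p') (Dir.L :: q') = [] := lcaP_cons_ne (by simp) _ _
      rw [fol_cat]
      constructor
      · rintro (⟨p'', q'', hp1, hq1, h⟩ | ⟨p'', q'', hp1, hq1, h⟩ | ⟨p'', q'', hp1, hq1, h⟩)
        · exact absurd (List.cons.inj hp1).1 (by simp)
        · exact absurd (List.cons.inj hq1).1 (by simp)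
        · exact absurd (List.cons.inj hp1).1 (by simp)
      · rintro (⟨-, hlast, -⟩ | ⟨u, ⟨hpre, hstar, -⟩, -, -⟩)
        · exfalso
          rw [hlca] at hlast
          have := lastSet_prefix (mem_lastExtent.1 hlast)
          simp only [List.nil_append] at this
          obtain ⟨h1, -⟩ := List.cons_prefix_cons.1 this
          simp at h1
        · rw [hlca] at hpre
          obtain rfl := List.prefix_nil.1 hpre
          exact absurd hstar hroot
    · -- R R
      rw [cond_lift hsubR hroot, ← ihs p' q' hp' hq']
      rw [fol_cat]
      constructor
      · rintro (⟨p'', q'', hp1, hq1, h⟩ | ⟨p'', q'', hp1, hq1, h⟩ | ⟨p'', q'', hp1, hq1, h⟩)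
        · exact absurd (List.cons.inj hp1).1 (by simp)
        · obtain ⟨-, rfl⟩ := List.cons.inj hp1
          obtain ⟨-, rfl⟩ := List.cons.inj hq1
          exact h
        · exact absurd (List.cons.inj hp1).1 (by simp)
      · intro h
        exact Or.inr (Or.inl ⟨p', q', rfl, rfl, h⟩)
  | alt r s ihr ihs =>
    intro p q hp hq
    have hsubL : ∀ v, (RE.alt r s).sub (Dir.L :: v) = r.sub v := fun _ => rfl
    have hsubR : ∀ v, (RE.alt r s).sub (Dir.R :: v) = s.sub v := fun _ => rfl
    have hroot : ¬ (RE.alt r s).IsStarNode [] := by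
      rintro ⟨t, ht⟩; simp [RE.sub] at ht
    have hrootc : ¬ (RE.alt r s).IsCatNode [] := by
      rintro ⟨t, t', ht⟩; simp [RE.sub] at ht
    rcases isPos_alt hp with ⟨p', rfl, hp'⟩ | ⟨p', rfl, hp'⟩ <;>
      rcases isPos_alt hq with ⟨q', rfl, hq'⟩ | ⟨q', rfl, hq'⟩
    · rw [cond_lift hsubL hroot, ← ihr p' q' hp' hq', fol_alt]
      constructor
      · rintro (⟨p'', q'', hp1, hq1, h⟩ | ⟨p'', q'', hp1, hq1, h⟩)
        · obtain ⟨-, rfl⟩ := List.cons.inj hp1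
          obtain ⟨-, rfl⟩ := List.cons.inj hq1
          exact h
        · exact absurd (List.cons.inj hp1).1 (by simp)
      · intro h; exact Or.inl ⟨p', q', rfl, rfl, h⟩
    · -- L R : both sides false
      have hlca : lcaP (Dir.L :: p') (Dir.R :: q') = [] := lcaP_cons_ne (by simp) _ _
      rw [fol_alt]
      constructor
      · rintro (⟨p'', q'', hp1, hq1, h⟩ | ⟨p'', q'', hp1, hq1, h⟩)
        · exact absurd (List.cons.inj hq1).1 (by simp)
        · exact absurd (List.cons.inj hp1).1 (by simp)
      · rintro (⟨hcat, -, -⟩ | ⟨u, ⟨hpre, hstar, -⟩, -, -⟩)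
        · rw [hlca] at hcat; exact absurd hcat hrootc
        · rw [hlca] at hpre
          obtain rfl := List.prefix_nil.1 hpre
          exact absurd hstar hroot
    · -- R L
      have hlca : lcaP (Dir.R :: p') (Dir.L :: q') = [] := lcaP_cons_ne (by simp) _ _
      rw [fol_alt]
      constructor
      · rintro (⟨p'', q'', hp1, hq1, h⟩ | ⟨p'', q'', hp1, hq1, h⟩)
        · exact absurd (List.cons.inj hp1).1 (by simp)
        · exact absurd (List.cons.inj hq1).1 (by simp)
      · rintro (⟨hcat, -, -⟩ | ⟨u, ⟨hpre, hstar, -⟩, -, -⟩)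
        · rw [hlca] at hcat; exact absurd hcat hrootc
        · rw [hlca] at hpre
          obtain rfl := List.prefix_nil.1 hpre
          exact absurd hstar hroot
    · rw [cond_lift hsubR hroot, ← ihs p' q' hp' hq', fol_alt]
      constructor
      · rintro (⟨p'', q'', hp1, hq1, h⟩ | ⟨p'', q'', hp1, hq1, h⟩)
        · exact absurd (List.cons.inj hp1).1 (by simp)
        · obtain ⟨-, rfl⟩ := List.cons.inj hp1
          obtain ⟨-, rfl⟩ := List.cons.inj hq1
          exact h
      · intro h; exact Or.inr ⟨p', q', rfl, rfl, h⟩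
  | star r ih =>
    intro p q hp hq
    have hsub : ∀ v, (RE.star r).sub (Dir.L :: v) = r.sub v := fun _ => rfl
    obtain ⟨p', rfl, hp'⟩ := isPos_star hp
    obtain ⟨q', rfl, hq'⟩ := isPos_star hq
    have hfol : Fol (RE.star r) (Dir.L :: p') (Dir.L :: q') ↔
        (Fol r p' q' ∨ (Lst r p' ∧ Fst r q')) := by
      rw [fol_star]
      constructor
      · rintro ⟨p'', q'', hp1, hq1, h⟩
        obtain ⟨-, rfl⟩ := List.cons.inj hp1
        obtain ⟨-, rfl⟩ := List.cons.inj hq1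
        exact h
      · intro h; exact ⟨p', q', rfl, rfl, h⟩
    rw [hfol, ih p' q' hp' hq']
    -- Now: Cond r p' q' ∨ (Lst ∧ Fst)  ↔  Cond (star r) (L::p') (L::q')
    have hcond : Cond (RE.star r) (Dir.L :: p') (Dir.L :: q') ↔
        (Cond r p' q' ∨
          ((∀ w, w <+: lcaP p' q' → ¬ r.IsStarNode w) ∧ Lst r p' ∧ Fst r q')) := by
      unfold Cond
      rw [lcaP_cons]
      constructor
      · rintro (⟨hcat, hlast, hfirst⟩ | ⟨u, hisa, hlast, hfirst⟩)
        · left; left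
          refine ⟨(lift_isCat hsub).1 hcat, ?_, ?_⟩
          · exact mem_lastExtent.2 ((lift_lastSet hsub).1 (by simpa using mem_lastExtent.1 hlast))
          · exact mem_firstExtent.2
              ((lift_firstSet hsub).1 (by simpa using mem_firstExtent.1 hfirst))
        · rcases ISA_star.1 hisa with ⟨u', rfl, hisa'⟩ | ⟨rfl, hno⟩
          · left; right
            exact ⟨u', hisa', (lift_lastSet hsub).1 (mem_lastExtent.1 hlast),
              (lift_firstSet hsub).1 (mem_firstExtent.1 hfirst)⟩
          · right
            refine ⟨hno, ?_, ?_⟩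
            · have := mem_lastSet_nil.1 (mem_lastExtent.1 hlast)
              obtain ⟨p'', hp'', h⟩ := lst_star_iff.1 this
              obtain ⟨-, rfl⟩ := List.cons.inj hp''
              exact h
            · have := mem_firstSet_nil.1 (mem_firstExtent.1 hfirst)
              obtain ⟨q'', hq'', h⟩ := fst_star_iff.1 this
              obtain ⟨-, rfl⟩ := List.cons.inj hq''
              exact h
      · rintro ((⟨hcat, hlast, hfirst⟩ | ⟨u, hisa, hlast, hfirst⟩) | ⟨hno, hl, hf⟩)
        · left
          refine ⟨(lift_isCat hsub).2 hcat, ?_, ?_⟩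
          · exact mem_lastExtent.2
              (by simpa using (lift_lastSet hsub).2 (mem_lastExtent.1 hlast))
          · exact mem_firstExtent.2
              (by simpa using (lift_firstSet hsub).2 (mem_firstExtent.1 hfirst))
        · right
          exact ⟨Dir.L :: u, ISA_star.2 (Or.inl ⟨u, rfl, hisa⟩),
            (lift_lastSet hsub).2 (mem_lastExtent.1 hlast),
            (lift_firstSet hsub).2 (mem_firstExtent.1 hfirst)⟩
        · right
          refine ⟨[], ISA_star.2 (Or.inr ⟨rfl, hno⟩), ?_, ?_⟩
          · exact mem_lastExtent.2 (mem_lastSet_nil.2 (lst_star_iff.2 ⟨p', rfl, hl⟩))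
          · exact mem_firstExtent.2 (mem_firstSet_nil.2 (fst_star_iff.2 ⟨q', rfl, hf⟩))
    rw [hcond]
    constructor
    · rintro (h | ⟨hl, hf⟩)
      · exact Or.inl h
      · by_cases hstar : ∀ w, w <+: lcaP p' q' → ¬ r.IsStarNode w
        · exact Or.inr ⟨hstar, hl, hf⟩
        · push_neg at hstar
          obtain ⟨w, hw, hws⟩ := hstar
          obtain ⟨u, hisa⟩ := exists_ISA hw hws
          left
          right
          refine ⟨u, hisa, ?_, ?_⟩
          · exact mem_lastExtent.2 (lst_prop r p' u hl
              (hisa.1.trans (lcaP_prefix_left p' q')))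
          · exact mem_firstExtent.2 (fst_prop r q' u hf
              (hisa.1.trans (lcaP_prefix_right p' q')))
    · rintro (h | ⟨-, hl, hf⟩)
      · exact Or.inl h
      · exact Or.inr ⟨hl, hf⟩

end REProof

/-- Characterization of the transitions of the position automaton: for a position `p`,
a position `q` labeled `α`, and `v = lca(p,q)`, we have `q ∈ δ(p,α)` iff either
(i) `v` is a `⊙`-node, `left(v) ∈ lastextent(p)` and `right(v) ∈ firstextent(q)`, or
(ii) `parent*(v)` exists and `parent*(v) ∈ lastextent(p) ∩ firstextent(q)`. -/
theorem delta_characterization {α : Type} (R : RE α) (p q : TreePath) (a : α)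
    (hp : R.IsPos p) (hq : R.labelOf q = some a) :
    q ∈ R.delta p a ↔
      ((R.IsCatNode (lcaP p q) ∧
          (lcaP p q ++ [Dir.L]) ∈ R.lastExtent p ∧
          (lcaP p q ++ [Dir.R]) ∈ R.firstExtent q) ∨
        (∃ u, R.IsLowestStarAnc (lcaP p q) u ∧
          u ∈ R.lastExtent p ∧ u ∈ R.firstExtent q)) := by
  have hq' : R.IsPos q := ⟨a, hq⟩
  have h := REProof.main R p q hp hq'
  simp only [RE.delta, Set.mem_setOf_eq, hq, true_and]
  exact h
end
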